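/- arXiv:2106.08208 — 8 statements merged into one kernel-verified Lean document; each statement's English description precedes it below -/
import Mathlib

section
/- Let X ⊆ ℝ^d be a closed convex set, let w : ℝ^d → ℝ be a differentiable ρ-strongly convex function (ρ > 0) with associated Bregman distance V(y,x) = w(y) − w(x) − ⟨∇w(x), y − x⟩, and let h : ℝ^d → ℝ be a convex function. Fix x ∈ X, g ∈ ℝ^d and γ > 0, let x* be the minimizer over y ∈ X of ⟨g, y⟩ + (1/γ) V(y,x) + h(y), and set G = (x − x*)/γ. Then ⟨g, G⟩ ≥ ρ‖G‖² + (1/γ)(h(x*) − h(x)). -/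
/-!
Moving from `x*` a fraction `t` of the way towards `x` stays in `X`. Minimality of `x*`,
convexity of `h`, and the strong convexity of `w` (once at the moved point, once as strong
monotonicity of `∇w` between the moved point and `x`) give
`ρ (1 - t/2) ‖x - x*‖² / γ + h(x*) - h(x) ≤ ⟨g, x - x*⟩`; letting `t → 0` and rescaling by
`1/γ` yields the claim.
-/

open scoped RealInnerProductSpace
open Filter Topology

section BregmanProx

variable {E : Type*} [NormedAddCommGroup E] [InnerProductSpace ℝ E]
  {w : E → ℝ} {gw : E → E} {ρ : ℝ}

def bregmanDiv (w : E → ℝ) (gw : E → E) (y x : E) : ℝ :=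
  w y - (w x + ⟪gw x, y - x⟫)

theorem strongMonotone_of_strongConvex
    (hw : ∀ x y, w x + ⟪gw x, y - x⟫ + ρ / 2 * ‖y - x‖ ^ 2 ≤ w y) (x y : E) :
    ρ * ‖x - y‖ ^ 2 ≤ ⟪gw x - gw y, x - y⟫ := by
  have hxy := hw x y
  have hyx := hw y x
  rw [← neg_sub x y, inner_neg_right, norm_neg] at hxy
  rw [inner_sub_left]
  linarith

theorem bregmanDiv_segment_sub_le
    (hw : ∀ x y, w x + ⟪gw x, y - x⟫ + ρ / 2 * ‖y - x‖ ^ 2 ≤ w y)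
    (x z : E) {t : ℝ} (ht0 : 0 ≤ t) (ht1 : t < 1) :
    bregmanDiv w gw (z + t • (x - z)) x - bregmanDiv w gw z x ≤
      -(ρ * t * (1 - t / 2) * ‖x - z‖ ^ 2) := by
  set y := z + t • (x - z)
  have hzy : z - y = (-t) • (x - z) := by simp only [y]; module
  have hxy : x - y = (1 - t) • (x - z) := by simp only [y]; module
  have hw_yz := hw y z
  rw [hzy, inner_smul_right, norm_smul, mul_pow, Real.norm_eq_abs, sq_abs, neg_sq] at hw_yz
  have hmono := strongMonotone_of_strongConvex hw x y
  rw [hxy, inner_smul_right, norm_smul, mul_pow, Real.norm_eq_abs, sq_abs, inner_sub_left]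
    at hmono
  have hmono' : ρ * (1 - t) * ‖x - z‖ ^ 2 ≤ ⟪gw x, x - z⟫ - ⟪gw y, x - z⟫ :=
    le_of_mul_le_mul_left (by linarith) (by linarith : 0 < 1 - t)
  have hyx : y - x = (-(1 - t)) • (x - z) := by simp only [y]; module
  have hzx : z - x = (-1 : ℝ) • (x - z) := by module
  simp only [bregmanDiv, hyx, hzx, inner_smul_right]
  linarith [mul_le_mul_of_nonneg_left hmono' ht0]

theorem le_inner_sub_of_bregmanProx_minimizer
    (hw : ∀ x y, w x + ⟪gw x, y - x⟫ + ρ / 2 * ‖y - x‖ ^ 2 ≤ w y)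
    {X : Set E} {h : E → ℝ} (hh : ConvexOn ℝ X h) {g x z : E} {γ : ℝ} (hγ : 0 < γ)
    (hx : x ∈ X) (hz : z ∈ X)
    (hmin : ∀ y ∈ X,
      ⟪g, z⟫ + (1 / γ) * bregmanDiv w gw z x + h z ≤
        ⟪g, y⟫ + (1 / γ) * bregmanDiv w gw y x + h y) :
    ρ / γ * ‖x - z‖ ^ 2 + (h z - h x) ≤ ⟪g, x - z⟫ := by
  have hsegment : ∀ t ∈ Set.Ioo (0 : ℝ) 1,
      ρ / γ * (1 - t / 2) * ‖x - z‖ ^ 2 + (h z - h x) ≤ ⟪g, x - z⟫ := by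
    rintro t ⟨ht0, ht1⟩
    have hcomb : (1 - t) • z + t • x = z + t • (x - z) := by module
    have hyX : z + t • (x - z) ∈ X := hcomb ▸ hh.1 hz hx (by linarith) ht0.le (by ring)
    have hhy : h (z + t • (x - z)) ≤ (1 - t) * h z + t * h x :=
      hcomb ▸ hh.2 hz hx (by linarith) ht0.le (by ring)
    have hV := mul_le_mul_of_nonneg_left
      (bregmanDiv_segment_sub_le hw x z ht0.le ht1) (by positivity : 0 ≤ 1 / γ)
    have hy := hmin _ hyX
    rw [inner_add_right, inner_smul_right] at hy
    have key : t * (ρ / γ * (1 - t / 2) * ‖x - z‖ ^ 2 + (h z - h x)) ≤ t * ⟪g, x - z⟫ := by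
      rw [div_eq_inv_mul, ← one_div]
      linarith
    exact le_of_mul_le_mul_left key ht0
  have hlim : Tendsto (fun t : ℝ => ρ / γ * (1 - t / 2) * ‖x - z‖ ^ 2 + (h z - h x))
      (𝓝[>] 0) (𝓝 (ρ / γ * ‖x - z‖ ^ 2 + (h z - h x))) := by
    have hcont : Continuous fun t : ℝ => ρ / γ * (1 - t / 2) * ‖x - z‖ ^ 2 + (h z - h x) := by
      fun_prop
    refine tendsto_nhdsWithin_of_tendsto_nhds ?_
    simpa using hcont.tendsto 0
  exact le_of_tendsto hlim (Filter.mem_of_superset (Ioo_mem_nhdsGT one_pos) hsegment)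

end BregmanProx

theorem statement0_general {d : ℕ} (X : Set (EuclideanSpace ℝ (Fin d)))
    (hXconvex : Convex ℝ X)
    (w : EuclideanSpace ℝ (Fin d) → ℝ)
    (gw : EuclideanSpace ℝ (Fin d) → EuclideanSpace ℝ (Fin d))
    (ρ : ℝ)
    (hstrong : ∀ x y : EuclideanSpace ℝ (Fin d),
      w x + ⟪gw x, y - x⟫ + ρ / 2 * ‖y - x‖ ^ 2 ≤ w y)
    (h : EuclideanSpace ℝ (Fin d) → ℝ) (hconv : ConvexOn ℝ Set.univ h)
    (V : EuclideanSpace ℝ (Fin d) → EuclideanSpace ℝ (Fin d) → ℝ)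
    (hV : ∀ y x, V y x = w y - (w x + ⟪gw x, y - x⟫))
    (x : EuclideanSpace ℝ (Fin d)) (hx : x ∈ X)
    (g : EuclideanSpace ℝ (Fin d)) (γ : ℝ) (hγ : 0 < γ)
    (xstar : EuclideanSpace ℝ (Fin d)) (hxstarX : xstar ∈ X)
    (hmin : ∀ y ∈ X,
      ⟪g, xstar⟫ + (1 / γ) * V xstar x + h xstar ≤ ⟪g, y⟫ + (1 / γ) * V y x + h y)
    (G : EuclideanSpace ℝ (Fin d)) (hG : G = (1 / γ) • (x - xstar)) :
    ρ * ‖G‖ ^ 2 + (1 / γ) * (h xstar - h x) ≤ ⟪g, G⟫ := by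
  have hV' : V = bregmanDiv w gw := funext fun y => funext (hV y)
  subst hV' hG
  have key := le_inner_sub_of_bregmanProx_minimizer hstrong
    (hconv.subset (Set.subset_univ X) hXconvex) hγ hx hxstarX hmin
  rw [inner_smul_right, norm_smul, mul_pow, Real.norm_eq_abs, sq_abs]
  have hscaled := mul_le_mul_of_nonneg_left key (by positivity : 0 ≤ 1 / γ)
  calc ρ * ((1 / γ) ^ 2 * ‖x - xstar‖ ^ 2) + 1 / γ * (h xstar - h x)
      = 1 / γ * (ρ / γ * ‖x - xstar‖ ^ 2 + (h xstar - h x)) := by ring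
    _ ≤ 1 / γ * ⟪g, x - xstar⟫ := hscaled

/-- Lemma 1 of Ghadimi–Lan–Zhang, as used in SUPER-ADAM:
for a closed convex `X ⊆ ℝ^d`, a differentiable `ρ`-strongly convex `w` with Bregman
distance `V`, a convex `h`, a point `x ∈ X`, a vector `g` and `γ > 0`, if `x*` minimizes
`⟨g, y⟩ + (1/γ) V(y, x) + h(y)` over `y ∈ X` and `G = (x − x*)/γ`, then
`⟨g, G⟩ ≥ ρ‖G‖² + (1/γ)(h(x*) − h(x))`. -/
theorem statement0 {d : ℕ} (X : Set (EuclideanSpace ℝ (Fin d)))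
    (hXne : X.Nonempty) (hXclosed : IsClosed X) (hXconvex : Convex ℝ X)
    (w : EuclideanSpace ℝ (Fin d) → ℝ)
    (gw : EuclideanSpace ℝ (Fin d) → EuclideanSpace ℝ (Fin d))
    (ρ : ℝ) (hρ : 0 < ρ)
    (hw : ∀ x, HasGradientAt w (gw x) x)
    (hstrong : ∀ x y : EuclideanSpace ℝ (Fin d),
      w x + ⟪gw x, y - x⟫ + ρ / 2 * ‖y - x‖ ^ 2 ≤ w y)
    (h : EuclideanSpace ℝ (Fin d) → ℝ) (hconv : ConvexOn ℝ Set.univ h)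
    (V : EuclideanSpace ℝ (Fin d) → EuclideanSpace ℝ (Fin d) → ℝ)
    (hV : ∀ y x, V y x = w y - (w x + ⟪gw x, y - x⟫))
    (x : EuclideanSpace ℝ (Fin d)) (hx : x ∈ X)
    (g : EuclideanSpace ℝ (Fin d)) (γ : ℝ) (hγ : 0 < γ)
    (xstar : EuclideanSpace ℝ (Fin d)) (hxstarX : xstar ∈ X)
    (hmin : ∀ y ∈ X,
      ⟪g, xstar⟫ + (1 / γ) * V xstar x + h xstar ≤ ⟪g, y⟫ + (1 / γ) * V y x + h y)
    (G : EuclideanSpace ℝ (Fin d)) (hG : G = (1 / γ) • (x - xstar)) :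
    ρ * ‖G‖ ^ 2 + (1 / γ) * (h xstar - h x) ≤ ⟪g, G⟫ :=
  statement0_general X hXconvex w gw ρ hstrong h hconv V hV x hx g γ hγ xstar hxstarX hmin G hG
end

section
/- Let X ⊆ ℝ^d be a closed convex set, let w : ℝ^d → ℝ be a differentiable ρ-strongly convex function (ρ > 0) with Bregman distance V(y,x) = w(y) − w(x) − ⟨∇w(x), y − x⟩, and let h : ℝ^d → ℝ be convex. Fix x ∈ X and γ > 0. For i = 1, 2, let x_i* be the minimizer over y ∈ X of ⟨g_i, y⟩ + (1/γ) V(y,x) + h(y), and set G_i = (x − x_i*)/γ. Then ‖G_1 − G_2‖ ≤ (1/ρ)‖g_1 − g_2‖. -/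
/-!
The objective `y ↦ ⟪g, y⟫ + V(y, x) / γ + h y` is `ρ / γ`-strongly convex on `X`, so it grows
quadratically away from its minimizer. Adding the growth inequalities of the two objectives, each
evaluated at the other's minimizer, the terms `V / γ + h` cancel and leave
`(ρ / γ) ‖x₁* - x₂*‖² ≤ ⟪g₁ - g₂, x₂* - x₁*⟫`; Cauchy–Schwarz then gives
`‖x₁* - x₂*‖ ≤ (γ / ρ) ‖g₁ - g₂‖`.
-/

open scoped RealInnerProductSpace

open Set Filter Topology

section NormedSpace

variable {E : Type*} [NormedAddCommGroup E] [NormedSpace ℝ E] {s : Set E} {m : ℝ} {f g : E → ℝ}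

lemma ConvexOn.add_strongConvexOn (hg : ConvexOn ℝ s g) (hf : StrongConvexOn s m f) :
    StrongConvexOn s m (g + f) := by
  simpa [StrongConvexOn] using hg.uniformConvexOn_zero.add hf

lemma StrongConvexOn.add_convexOn (hf : StrongConvexOn s m f) (hg : ConvexOn ℝ s g) :
    StrongConvexOn s m (f + g) := by
  simpa [StrongConvexOn] using hf.add hg.uniformConvexOn_zero

lemma StrongConvexOn.add_sq_norm_sub_le_of_isMinOn {x y : E} (hf : StrongConvexOn s m f)
    (hmin : IsMinOn f s x) (hx : x ∈ s) (hy : y ∈ s) :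
    f x + m / 2 * ‖y - x‖ ^ 2 ≤ f y := by
  set c := m / 2 * ‖y - x‖ ^ 2 with hc
  -- compare `f x` with `f` at the point `(1 - t) • x + t • y` of the segment, then let `t → 0`
  have hseg : ∀ t ∈ Ioo (0 : ℝ) 1, f x + c ≤ f y + t * c := by
    rintro t ⟨ht0, ht1⟩
    have hab : 1 - t + t = 1 := sub_add_cancel 1 t
    have hle_mid := isMinOn_iff.1 hmin _ (hf.1 hx hy (sub_nonneg.2 ht1.le) ht0.le hab)
    have hmid_le := hf.2 hx hy (sub_nonneg.2 ht1.le) ht0.le hab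
    simp only [smul_eq_mul, norm_sub_rev x y, ← hc] at hmid_le
    have : t * (f x + c) ≤ t * (f y + t * c) := by nlinarith
    exact le_of_mul_le_mul_left this ht0
  have hlim : Tendsto (fun t => f y + t * c) (𝓝[>] 0) (𝓝 (f y)) := by
    have : Continuous fun t : ℝ => f y + t * c := by fun_prop
    simpa using (this.tendsto 0).mono_left nhdsWithin_le_nhds
  exact ge_of_tendsto hlim (eventually_of_mem (Ioo_mem_nhdsGT one_pos) hseg)

end NormedSpace

section InnerProductSpace

variable {E : Type*} [NormedAddCommGroup E] [InnerProductSpace ℝ E] {s : Set E} {m : ℝ}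
  {f : E → ℝ}

lemma strongConvexOn_of_add_inner_le (hs : Convex ℝ s) (f' : E → E)
    (hf : ∀ x ∈ s, ∀ y ∈ s, f x + ⟪f' x, y - x⟫ + m / 2 * ‖y - x‖ ^ 2 ≤ f y) :
    StrongConvexOn s m f := by
  refine ⟨hs, fun x hx y hy a b ha hb hab => ?_⟩
  obtain rfl : b = 1 - a := by linarith
  have hz : a • x + (1 - a) • y ∈ s := hs hx hy ha hb hab
  -- with `z = a • x + (1 - a) • y`, the gradient terms cancel in the weighted sum,
  -- as `a • (x - z) + (1 - a) • (y - z) = 0`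
  have hx' := hf _ hz x hx
  have hy' := hf _ hz y hy
  rw [show x - (a • x + (1 - a) • y) = (1 - a) • (x - y) by module, real_inner_smul_right,
    norm_smul, Real.norm_of_nonneg hb] at hx'
  rw [show y - (a • x + (1 - a) • y) = (-a) • (x - y) by module, real_inner_smul_right,
    norm_smul, norm_neg, Real.norm_of_nonneg ha] at hy'
  rw [smul_eq_mul, smul_eq_mul]
  nlinarith [mul_le_mul_of_nonneg_left hx' ha, mul_le_mul_of_nonneg_left hy' hb]

/-- The Bregman distance `y ↦ V(y, x)` inherits the first-order lower bound of `w`, with gradient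
`y ↦ gw y - gw x`; scaling by `c` scales both. -/
lemma strongConvexOn_mul_bregman (hs : Convex ℝ s) {w : E → ℝ} {gw : E → E} {ρ c : ℝ}
    (hc : 0 ≤ c) (hw : ∀ x y, w x + ⟪gw x, y - x⟫ + ρ / 2 * ‖y - x‖ ^ 2 ≤ w y) (x : E) :
    StrongConvexOn s (c * ρ) fun y => c * (w y - (w x + ⟪gw x, y - x⟫)) := by
  refine strongConvexOn_of_add_inner_le hs (fun y => c • (gw y - gw x)) fun y _ z _ => ?_
  have hyz : z - x = (z - y) + (y - x) := by abel
  have := mul_le_mul_of_nonneg_left (hw y z) hc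
  rw [hyz, inner_add_right, real_inner_smul_left, inner_sub_left]
  nlinarith

lemma StrongConvexOn.norm_sub_le_of_isMinOn_inner_add {g₁ g₂ x₁ x₂ : E}
    (hf : StrongConvexOn s m f) (hm : 0 < m)
    (h₁ : IsMinOn (fun y => ⟪g₁, y⟫ + f y) s x₁) (h₂ : IsMinOn (fun y => ⟪g₂, y⟫ + f y) s x₂)
    (hx₁ : x₁ ∈ s) (hx₂ : x₂ ∈ s) :
    ‖x₁ - x₂‖ ≤ ‖g₁ - g₂‖ / m := by
  have hinner (g : E) : StrongConvexOn s m fun y => ⟪g, y⟫ + f y :=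
    ((innerSL ℝ g).toLinearMap.convexOn hf.1).add_strongConvexOn hf
  have hgrowth₁ := (hinner g₁).add_sq_norm_sub_le_of_isMinOn h₁ hx₁ hx₂
  have hgrowth₂ := (hinner g₂).add_sq_norm_sub_le_of_isMinOn h₂ hx₂ hx₁
  have hmono : m * ‖x₁ - x₂‖ ^ 2 ≤ ⟪g₁ - g₂, x₂ - x₁⟫ := by
    rw [norm_sub_rev x₂ x₁] at hgrowth₁
    simp only [inner_sub_left, inner_sub_right] at hgrowth₁ hgrowth₂ ⊢
    linarith
  have hcs := real_inner_le_norm (g₁ - g₂) (x₂ - x₁)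
  rw [norm_sub_rev x₂ x₁] at hcs
  rw [le_div_iff₀ hm]
  nlinarith [norm_nonneg (x₁ - x₂), norm_nonneg (g₁ - g₂)]

end InnerProductSpace

theorem statement1_general {d : ℕ} (X : Set (EuclideanSpace ℝ (Fin d)))
    (hXconvex : Convex ℝ X)
    (w : EuclideanSpace ℝ (Fin d) → ℝ)
    (gw : EuclideanSpace ℝ (Fin d) → EuclideanSpace ℝ (Fin d))
    (ρ : ℝ) (hρ : 0 < ρ)
    (hstrong : ∀ x y : EuclideanSpace ℝ (Fin d),
      w x + ⟪gw x, y - x⟫ + ρ / 2 * ‖y - x‖ ^ 2 ≤ w y)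
    (h : EuclideanSpace ℝ (Fin d) → ℝ) (hconv : ConvexOn ℝ Set.univ h)
    (V : EuclideanSpace ℝ (Fin d) → EuclideanSpace ℝ (Fin d) → ℝ)
    (hV : ∀ y x, V y x = w y - (w x + ⟪gw x, y - x⟫))
    (x : EuclideanSpace ℝ (Fin d))
    (g₁ g₂ : EuclideanSpace ℝ (Fin d)) (γ : ℝ) (hγ : 0 < γ)
    (xstar₁ xstar₂ : EuclideanSpace ℝ (Fin d))
    (hxstar₁X : xstar₁ ∈ X) (hxstar₂X : xstar₂ ∈ X)
    (hmin₁ : ∀ y ∈ X,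
      ⟪g₁, xstar₁⟫ + (1 / γ) * V xstar₁ x + h xstar₁ ≤ ⟪g₁, y⟫ + (1 / γ) * V y x + h y)
    (hmin₂ : ∀ y ∈ X,
      ⟪g₂, xstar₂⟫ + (1 / γ) * V xstar₂ x + h xstar₂ ≤ ⟪g₂, y⟫ + (1 / γ) * V y x + h y)
    (G₁ G₂ : EuclideanSpace ℝ (Fin d))
    (hG₁ : G₁ = (1 / γ) • (x - xstar₁)) (hG₂ : G₂ = (1 / γ) • (x - xstar₂)) :
    ‖G₁ - G₂‖ ≤ (1 / ρ) * ‖g₁ - g₂‖ := by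
  have hf : StrongConvexOn X (1 / γ * ρ) fun y => 1 / γ * V y x + h y := by
    simp_rw [hV]
    exact (strongConvexOn_mul_bregman hXconvex (by positivity) hstrong x).add_convexOn
      (hconv.subset (subset_univ X) hXconvex)
  have hlip := hf.norm_sub_le_of_isMinOn_inner_add (by positivity)
    (isMinOn_iff.2 fun y hy => by simpa only [add_assoc] using hmin₁ y hy)
    (isMinOn_iff.2 fun y hy => by simpa only [add_assoc] using hmin₂ y hy) hxstar₁X hxstar₂X
  calc ‖G₁ - G₂‖ = 1 / γ * ‖xstar₁ - xstar₂‖ := by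
        rw [hG₁, hG₂, ← smul_sub, sub_sub_sub_cancel_left, norm_smul, norm_sub_rev,
          Real.norm_of_nonneg (by positivity)]
    _ ≤ 1 / γ * (‖g₁ - g₂‖ / (1 / γ * ρ)) := by gcongr
    _ = 1 / ρ * ‖g₁ - g₂‖ := by field_simp

/-- Proposition 1 of Ghadimi–Lan–Zhang, as used in SUPER-ADAM:
with `X`, `w`, `V`, `h`, `x ∈ X`, `γ > 0` as before, if for `i = 1, 2` the point `xᵢ*`
minimizes `⟨gᵢ, y⟩ + (1/γ) V(y, x) + h(y)` over `y ∈ X` and `Gᵢ = (x − xᵢ*)/γ`, then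
`‖G₁ − G₂‖ ≤ (1/ρ)‖g₁ − g₂‖`. -/
theorem statement1 {d : ℕ} (X : Set (EuclideanSpace ℝ (Fin d)))
    (hXne : X.Nonempty) (hXclosed : IsClosed X) (hXconvex : Convex ℝ X)
    (w : EuclideanSpace ℝ (Fin d) → ℝ)
    (gw : EuclideanSpace ℝ (Fin d) → EuclideanSpace ℝ (Fin d))
    (ρ : ℝ) (hρ : 0 < ρ)
    (hw : ∀ x, HasGradientAt w (gw x) x)
    (hstrong : ∀ x y : EuclideanSpace ℝ (Fin d),
      w x + ⟪gw x, y - x⟫ + ρ / 2 * ‖y - x‖ ^ 2 ≤ w y)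
    (h : EuclideanSpace ℝ (Fin d) → ℝ) (hconv : ConvexOn ℝ Set.univ h)
    (V : EuclideanSpace ℝ (Fin d) → EuclideanSpace ℝ (Fin d) → ℝ)
    (hV : ∀ y x, V y x = w y - (w x + ⟪gw x, y - x⟫))
    (x : EuclideanSpace ℝ (Fin d)) (hx : x ∈ X)
    (g₁ g₂ : EuclideanSpace ℝ (Fin d)) (γ : ℝ) (hγ : 0 < γ)
    (xstar₁ xstar₂ : EuclideanSpace ℝ (Fin d))
    (hxstar₁X : xstar₁ ∈ X) (hxstar₂X : xstar₂ ∈ X)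
    (hmin₁ : ∀ y ∈ X,
      ⟪g₁, xstar₁⟫ + (1 / γ) * V xstar₁ x + h xstar₁ ≤ ⟪g₁, y⟫ + (1 / γ) * V y x + h y)
    (hmin₂ : ∀ y ∈ X,
      ⟪g₂, xstar₂⟫ + (1 / γ) * V xstar₂ x + h xstar₂ ≤ ⟪g₂, y⟫ + (1 / γ) * V y x + h y)
    (G₁ G₂ : EuclideanSpace ℝ (Fin d))
    (hG₁ : G₁ = (1 / γ) • (x - xstar₁)) (hG₂ : G₂ = (1 / γ) • (x - xstar₂)) :
    ‖G₁ - G₂‖ ≤ (1 / ρ) * ‖g₁ - g₂‖ :=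
  statement1_general X hXconvex w gw ρ hρ hstrong h hconv V hV x g₁ g₂ γ hγ xstar₁ xstar₂ hxstar₁X
    hxstar₂X hmin₁ hmin₂ G₁ G₂ hG₁ hG₂
end

section
/- Let X ⊆ ℝ^d be a closed convex set, let f : ℝ^d → ℝ be differentiable and L-smooth (L > 0), let H ∈ ℝ^{d×d} be a symmetric matrix with H ⪰ ρ I_d for some ρ > 0, let x_t ∈ X, g_t ∈ ℝ^d, let 0 < μ_t ≤ 1 and 0 < γ ≤ ρ/(2 L μ_t). Define x̃_{t+1} as the minimizer over x ∈ X of ⟨g_t, x⟩ + (1/(2γ)) (x − x_t)ᵀ H (x − x_t), and x_{t+1} = (1 − μ_t) x_t + μ_t x̃_{t+1}. Then f(x_{t+1}) ≤ f(x_t) + (μ_t γ / ρ) ‖∇f(x_t) − g_t‖² − (ρ μ_t / (2γ)) ‖x̃_{t+1} − x_t‖². -/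
open scoped RealInnerProductSpace

/-!
Two inequalities drive the estimate. Smoothness gives the descent lemma
`f y ≤ f x + ⟪∇f x, y - x⟫ + L/2 ‖y - x‖²`, obtained by integrating the Lipschitz bound on `∇f`
along the segment. Fermat's rule for the quadratic model, minimized at `x̃` over the convex set
`X ∋ x_t`, in the direction of `x_t`, gives `⟪g_t, x̃ - x_t⟫ ≤ -(1/γ) ⟪H δ, δ⟫ ≤ -(ρ/γ)‖δ‖²` with
`δ = x̃ - x_t`. Applying the descent lemma to the step `x_{t+1} - x_t = μ δ`, splitting
`∇f(x_t) = (∇f(x_t) - g_t) + g_t` and bounding the error term by Young's inequality, the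
step-size condition `L μ ≤ ρ/(2γ)` absorbs the curvature term.
-/

open Set in
theorem image_one_le_of_deriv_le_add_mul {g g' : ℝ → ℝ} {K : ℝ} (hg : ∀ t, HasDerivAt g (g' t) t)
    (hg' : ∀ t ∈ Ico (0 : ℝ) 1, g' t ≤ g' 0 + K * t) :
    g 1 ≤ g 0 + g' 0 + K / 2 := by
  have hB : ∀ t, HasDerivAt (fun t => g 0 + g' 0 * t + K / 2 * t ^ 2) (g' 0 + K * t) t := by
    intro t
    refine ((((hasDerivAt_id t).const_mul (g' 0)).const_add (g 0)).add
      ((hasDerivAt_pow 2 t).const_mul (K / 2))).congr_deriv ?_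
    simp only [mul_one, Nat.cast_ofNat]
    ring
  have := image_le_of_deriv_right_le_deriv_boundary (a := 0) (b := 1)
    (fun t _ => (hg t).continuousAt.continuousWithinAt) (fun t _ => (hg t).hasDerivWithinAt)
    (by simp) (fun t _ => (hB t).continuousAt.continuousWithinAt)
    (fun t _ => (hB t).hasDerivWithinAt) hg' (right_mem_Icc.2 zero_le_one)
  simpa using this

section InnerProductSpace

variable {E : Type*} [NormedAddCommGroup E] [InnerProductSpace ℝ E]

theorem le_add_inner_add_of_gradient_lipschitz [CompleteSpace E] {f : E → ℝ} {gf : E → E}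
    (hf : ∀ x, HasGradientAt f (gf x) x) {L : ℝ}
    (hsmooth : ∀ x y, ‖gf x - gf y‖ ≤ L * ‖x - y‖) (x y : E) :
    f y ≤ f x + ⟪gf x, y - x⟫ + L / 2 * ‖y - x‖ ^ 2 := by
  set v := y - x
  have hline : ∀ t : ℝ, HasDerivAt (fun t : ℝ => f (x + t • v)) ⟪gf (x + t • v), v⟫ t := by
    intro t
    have := (hf (x + t • v)).hasFDerivAt.comp_hasDerivAt t
      (((hasDerivAt_id t).smul_const v).const_add x)
    simpa [InnerProductSpace.toDual_apply_apply, Function.comp_def] using this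
  have hbound : ∀ t ∈ Set.Ico (0 : ℝ) 1, ⟪gf (x + t • v), v⟫ ≤ ⟪gf x, v⟫ + L * ‖v‖ ^ 2 * t := by
    intro t ht
    calc ⟪gf (x + t • v), v⟫ = ⟪gf x, v⟫ + ⟪gf (x + t • v) - gf x, v⟫ := by
          rw [inner_sub_left]; ring
      _ ≤ ⟪gf x, v⟫ + ‖gf (x + t • v) - gf x‖ * ‖v‖ := by
          gcongr; exact real_inner_le_norm _ _
      _ ≤ ⟪gf x, v⟫ + L * ‖t • v‖ * ‖v‖ := by
          gcongr; simpa using hsmooth (x + t • v) x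
      _ = ⟪gf x, v⟫ + L * ‖v‖ ^ 2 * t := by
          rw [norm_smul, Real.norm_of_nonneg ht.1]; ring
  have := image_one_le_of_deriv_le_add_mul hline (by simpa using hbound)
  simp only [v, zero_smul, add_zero, one_smul, add_sub_cancel] at this
  linarith

theorem inner_sub_le_of_isMinOn_quadratic {X : Set E} (hX : Convex ℝ X) (T : E →L[ℝ] E)
    {g z x : E} {c : ℝ} (hz : z ∈ X) (hx : x ∈ X)
    (hmin : IsMinOn (fun y => ⟪g, y⟫ + c * ⟪T (y - z), y - z⟫) X x) :
    ⟪g, x - z⟫ ≤ -(2 * c) * ⟪T (x - z), x - z⟫ := by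
  have hshift := (hasFDerivAt_id (𝕜 := ℝ) x).sub_const z
  have hφ := ((innerSL ℝ g).hasFDerivAt (x := x)).add
    (((T.hasFDerivAt.comp x hshift).inner ℝ hshift).const_mul c)
  have := hmin.localize.hasFDerivWithinAt_nonneg hφ.hasFDerivWithinAt
    (sub_mem_posTangentConeAt_of_segment_subset (hX.segment_subset hx hz))
  simp only [id_eq, Function.comp_apply, ContinuousLinearMap.comp_id,
    add_apply, coe_innerSL_apply, smul_apply,
    ContinuousLinearMap.comp_apply, ContinuousLinearMap.prod_apply, ContinuousLinearMap.id_apply,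
    fderivInnerCLM_apply, smul_eq_mul] at this
  rw [← neg_sub x z, map_neg, inner_neg_left, inner_neg_right, inner_neg_right] at this
  linarith

end InnerProductSpace

theorem statement2_general {d : ℕ} (X : Set (EuclideanSpace ℝ (Fin d)))
    (hXconvex : Convex ℝ X)
    (f : EuclideanSpace ℝ (Fin d) → ℝ)
    (gf : EuclideanSpace ℝ (Fin d) → EuclideanSpace ℝ (Fin d))
    (hf : ∀ x, HasGradientAt f (gf x) x)
    (L : ℝ) (hL : 0 < L)
    (hsmooth : ∀ x y : EuclideanSpace ℝ (Fin d), ‖gf x - gf y‖ ≤ L * ‖x - y‖)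
    (H : Matrix (Fin d) (Fin d) ℝ)
    (ρ : ℝ) (hρ : 0 < ρ)
    (hHpd : ∀ v : EuclideanSpace ℝ (Fin d),
      ρ * ‖v‖ ^ 2 ≤ ⟪(Matrix.toEuclideanCLM (𝕜 := ℝ) H) v, v⟫)
    (xt : EuclideanSpace ℝ (Fin d)) (hxt : xt ∈ X)
    (gt : EuclideanSpace ℝ (Fin d))
    (μ γ : ℝ) (hμ0 : 0 < μ) (hγ0 : 0 < γ) (hγ : γ ≤ ρ / (2 * L * μ))
    (xtil : EuclideanSpace ℝ (Fin d)) (hxtilX : xtil ∈ X)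
    (hxtilmin : ∀ y ∈ X,
      ⟪gt, xtil⟫ + (1 / (2 * γ)) * ⟪(Matrix.toEuclideanCLM (𝕜 := ℝ) H) (xtil - xt), xtil - xt⟫
        ≤ ⟪gt, y⟫ + (1 / (2 * γ)) * ⟪(Matrix.toEuclideanCLM (𝕜 := ℝ) H) (y - xt), y - xt⟫)
    (xt1 : EuclideanSpace ℝ (Fin d)) (hxt1 : xt1 = (1 - μ) • xt + μ • xtil) :
    f xt1 ≤ f xt + μ * γ / ρ * ‖gf xt - gt‖ ^ 2 - ρ * μ / (2 * γ) * ‖xtil - xt‖ ^ 2 := by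
  set δ := xtil - xt
  have hopt : ⟪gt, δ⟫ ≤ -(ρ / γ) * ‖δ‖ ^ 2 := calc
    ⟪gt, δ⟫ ≤ -(2 * (1 / (2 * γ))) * ⟪Matrix.toEuclideanCLM (𝕜 := ℝ) H δ, δ⟫ :=
      inner_sub_le_of_isMinOn_quadratic hXconvex _ hxt hxtilX hxtilmin
    _ ≤ -(2 * (1 / (2 * γ))) * (ρ * ‖δ‖ ^ 2) :=
      mul_le_mul_of_nonpos_left (hHpd δ) (by simp only [neg_nonpos]; positivity)
    _ = -(ρ / γ) * ‖δ‖ ^ 2 := by field_simp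
  have hyoung : ‖gf xt - gt‖ * ‖δ‖ ≤ γ / ρ * ‖gf xt - gt‖ ^ 2 + ρ / (4 * γ) * ‖δ‖ ^ 2 := by
    have hsq : γ / ρ * ‖gf xt - gt‖ ^ 2 + ρ / (4 * γ) * ‖δ‖ ^ 2 - ‖gf xt - gt‖ * ‖δ‖
        = (2 * γ * ‖gf xt - gt‖ - ρ * ‖δ‖) ^ 2 / (4 * γ * ρ) := by
      field_simp; ring
    have hγρ : 0 ≤ 4 * γ * ρ := by positivity
    linarith [div_nonneg (sq_nonneg (2 * γ * ‖gf xt - gt‖ - ρ * ‖δ‖)) hγρ]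
  have hLμ : L * μ ≤ ρ / (2 * γ) := by
    rw [le_div_iff₀ (by positivity)]
    rw [le_div_iff₀ (by positivity)] at hγ
    linarith
  have hstep : xt1 - xt = μ • δ := by rw [hxt1]; module
  calc f xt1 ≤ f xt + ⟪gf xt, xt1 - xt⟫ + L / 2 * ‖xt1 - xt‖ ^ 2 :=
        le_add_inner_add_of_gradient_lipschitz hf hsmooth xt xt1
    _ = f xt + μ * (⟪gf xt - gt, δ⟫ + ⟪gt, δ⟫) + μ / 2 * (L * μ) * ‖δ‖ ^ 2 := by
        rw [hstep, real_inner_smul_right, norm_smul, Real.norm_of_nonneg hμ0.le, inner_sub_left]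
        ring
    _ ≤ f xt + μ * (γ / ρ * ‖gf xt - gt‖ ^ 2 + ρ / (4 * γ) * ‖δ‖ ^ 2 - ρ / γ * ‖δ‖ ^ 2)
          + μ / 2 * (ρ / (2 * γ)) * ‖δ‖ ^ 2 := by
        gcongr
        linarith [real_inner_le_norm (gf xt - gt) δ]
    _ = f xt + μ * γ / ρ * ‖gf xt - gt‖ ^ 2 - ρ * μ / (2 * γ) * ‖δ‖ ^ 2 := by
        field_simp; ring

/-- descent lemma, Lemma 3 in SUPER-ADAM: for `X ⊆ ℝ^d` closed convex,
`f` differentiable and `L`-smooth, a symmetric matrix `H ⪰ ρ I_d` with `ρ > 0`,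
`x_t ∈ X`, `g_t ∈ ℝ^d`, `0 < μ_t ≤ 1` and `0 < γ ≤ ρ/(2 L μ_t)`, if `x̃_{t+1}` minimizes
`⟨g_t, x⟩ + (1/(2γ)) (x − x_t)ᵀ H (x − x_t)` over `X` and
`x_{t+1} = (1 − μ_t) x_t + μ_t x̃_{t+1}`, then
`f(x_{t+1}) ≤ f(x_t) + (μ_t γ/ρ)‖∇f(x_t) − g_t‖² − (ρ μ_t/(2γ))‖x̃_{t+1} − x_t‖²`. -/
theorem statement2 {d : ℕ} (X : Set (EuclideanSpace ℝ (Fin d)))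
    (hXne : X.Nonempty) (hXclosed : IsClosed X) (hXconvex : Convex ℝ X)
    (f : EuclideanSpace ℝ (Fin d) → ℝ)
    (gf : EuclideanSpace ℝ (Fin d) → EuclideanSpace ℝ (Fin d))
    (hf : ∀ x, HasGradientAt f (gf x) x)
    (L : ℝ) (hL : 0 < L)
    (hsmooth : ∀ x y : EuclideanSpace ℝ (Fin d), ‖gf x - gf y‖ ≤ L * ‖x - y‖)
    (H : Matrix (Fin d) (Fin d) ℝ) (hHsymm : H.IsSymm)
    (ρ : ℝ) (hρ : 0 < ρ)
    (hHpd : ∀ v : EuclideanSpace ℝ (Fin d),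
      ρ * ‖v‖ ^ 2 ≤ ⟪(Matrix.toEuclideanCLM (𝕜 := ℝ) H) v, v⟫)
    (xt : EuclideanSpace ℝ (Fin d)) (hxt : xt ∈ X)
    (gt : EuclideanSpace ℝ (Fin d))
    (μ γ : ℝ) (hμ0 : 0 < μ) (hμ1 : μ ≤ 1) (hγ0 : 0 < γ) (hγ : γ ≤ ρ / (2 * L * μ))
    (xtil : EuclideanSpace ℝ (Fin d)) (hxtilX : xtil ∈ X)
    (hxtilmin : ∀ y ∈ X,
      ⟪gt, xtil⟫ + (1 / (2 * γ)) * ⟪(Matrix.toEuclideanCLM (𝕜 := ℝ) H) (xtil - xt), xtil - xt⟫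
        ≤ ⟪gt, y⟫ + (1 / (2 * γ)) * ⟪(Matrix.toEuclideanCLM (𝕜 := ℝ) H) (y - xt), y - xt⟫)
    (xt1 : EuclideanSpace ℝ (Fin d)) (hxt1 : xt1 = (1 - μ) • xt + μ • xtil) :
    f xt1 ≤ f xt + μ * γ / ρ * ‖gf xt - gt‖ ^ 2 - ρ * μ / (2 * γ) * ‖xtil - xt‖ ^ 2 :=
  statement2_general X hXconvex f gf hf L hL hsmooth H ρ hρ hHpd xt hxt gt μ γ hμ0 hγ0 hγ xtil
    hxtilX hxtilmin xt1 hxt1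
end

section
/- Let f(x) = E_{ξ∼D}[f(x;ξ)] where for every ξ the map x ↦ f(x;ξ) is differentiable and L-smooth, E_ξ[∇f(x;ξ)] = ∇f(x) and E_ξ‖∇f(x;ξ) − ∇f(x)‖² ≤ σ² for all x. Let x_t, x̃_{t+1}, g_t be random vectors in ℝ^d, let 0 < μ_t ≤ 1 and 0 < α_{t+1} ≤ 1, set x_{t+1} = x_t + μ_t (x̃_{t+1} − x_t), let ξ_{t+1} ∼ D be independent of (x_t, x̃_{t+1}, g_t), and define g_{t+1} = ∇f(x_{t+1}; ξ_{t+1}) + (1 − α_{t+1}) (g_t − ∇f(x_t; ξ_{t+1})). Then E‖∇f(x_{t+1}) − g_{t+1}‖² ≤ (1 − α_{t+1})² E‖∇f(x_t) − g_t‖² + 2 (1 − α_{t+1})² L² μ_t² E‖x̃_{t+1} − x_t‖² + 2 α_{t+1}² σ². -/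
/-!
Conditionally on the past `(x_t, x̃_{t+1}, g_t)`, the new error splits as
`∇f(x_{t+1}) - g_{t+1} = (1 - α)(∇f(x_t) - g_t) + (1 - α) Z + (-α) W` with
`Z = (∇f(x_t;ξ) - ∇f(x_{t+1};ξ)) - (∇f(x_t) - ∇f(x_{t+1}))` and `W = ∇f(x_{t+1};ξ) - ∇f(x_{t+1})`,
both of mean zero in `ξ`. So the cross term vanishes, and `‖(1 - α) Z - α W‖² ≤ 2(1 - α)²‖Z‖² + 2α²‖W‖²`,
where `E‖Z‖²` is a variance, hence at most the second moment of `∇f(x_t;ξ) - ∇f(x_{t+1};ξ)`, which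
smoothness bounds by `L²‖x_{t+1} - x_t‖²`, and `E‖W‖² ≤ σ²`. Independence makes the joint law of the past and `ξ_{t+1}` a product
measure, so this fibrewise bound integrates to the claim by Fubini.
-/

open scoped RealInnerProductSpace
open MeasureTheory ProbabilityTheory

theorem norm_smul_sq {E : Type*} [NormedAddCommGroup E] [NormedSpace ℝ E] (c : ℝ) (v : E) :
    ‖c • v‖ ^ 2 = c ^ 2 * ‖v‖ ^ 2 := by
  rw [norm_smul, mul_pow, Real.norm_eq_abs, sq_abs]

theorem integral_norm_add_sq_le {Ω E : Type*} [MeasurableSpace Ω] {P : Measure Ω}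
    [NormedAddCommGroup E] {U V : Ω → E} (hU : MemLp U 2 P) (hV : MemLp V 2 P) :
    ∫ ω, ‖U ω + V ω‖ ^ 2 ∂P ≤ 2 * ∫ ω, ‖U ω‖ ^ 2 ∂P + 2 * ∫ ω, ‖V ω‖ ^ 2 ∂P := by
  have hU2 := hU.integrable_norm_pow two_ne_zero
  have hV2 := hV.integrable_norm_pow two_ne_zero
  rw [← integral_const_mul, ← integral_const_mul,
    ← integral_add (hU2.const_mul _) (hV2.const_mul _)]
  refine integral_mono ((hU.add hV).integrable_norm_pow two_ne_zero)
    ((hU2.const_mul _).add (hV2.const_mul _)) fun ω => ?_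
  calc ‖U ω + V ω‖ ^ 2 ≤ (‖U ω‖ + ‖V ω‖) ^ 2 := by gcongr; exact norm_add_le _ _
    _ ≤ 2 * ‖U ω‖ ^ 2 + 2 * ‖V ω‖ ^ 2 := by linarith [add_sq_le (a := ‖U ω‖) (b := ‖V ω‖)]

section SecondMoment

variable {Ω E : Type*} [MeasurableSpace Ω] {P : Measure Ω} [IsProbabilityMeasure P]
  [NormedAddCommGroup E] [InnerProductSpace ℝ E] [CompleteSpace E]

theorem integral_norm_const_add_sq {B : Ω → E} (hB : MemLp B 2 P) (hB0 : ∫ ω, B ω ∂P = 0)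
    (a : E) : ∫ ω, ‖a + B ω‖ ^ 2 ∂P = ‖a‖ ^ 2 + ∫ ω, ‖B ω‖ ^ 2 ∂P := by
  have hinner : Integrable (fun ω => ⟪a, B ω⟫) P := (hB.integrable one_le_two).const_inner a
  have hlin : Integrable (fun ω => ‖a‖ ^ 2 + 2 * ⟪a, B ω⟫) P :=
    (integrable_const _).add (hinner.const_mul 2)
  simp_rw [norm_add_sq_real]
  rw [integral_add hlin (hB.integrable_norm_pow two_ne_zero),
    integral_add (integrable_const _) (hinner.const_mul 2), integral_const_mul,
    integral_inner (hB.integrable one_le_two), hB0]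
  simp

theorem integral_norm_sub_integral_sq_le {Y : Ω → E} (hY : MemLp Y 2 P) :
    ∫ ω, ‖Y ω - ∫ ω', Y ω' ∂P‖ ^ 2 ∂P ≤ ∫ ω, ‖Y ω‖ ^ 2 ∂P := by
  have hZ : MemLp (fun ω => Y ω - ∫ ω', Y ω' ∂P) 2 P := hY.sub (memLp_const _)
  have hZ0 : ∫ ω, (Y ω - ∫ ω', Y ω' ∂P) ∂P = 0 := by
    rw [integral_sub (hY.integrable one_le_two) (integrable_const _)]
    simp
  have h := integral_norm_const_add_sq hZ hZ0 (∫ ω', Y ω' ∂P)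
  simp only [add_sub_cancel] at h
  rw [h]
  exact le_add_of_nonneg_left (sq_nonneg _)

theorem integral_norm_sub_integral_sq_le_sq {Y : Ω → E} {C : ℝ}
    (hY : AEStronglyMeasurable Y P) (hC : ∀ᵐ ω ∂P, ‖Y ω‖ ≤ C) :
    ∫ ω, ‖Y ω - ∫ ω', Y ω' ∂P‖ ^ 2 ∂P ≤ C ^ 2 :=
  calc ∫ ω, ‖Y ω - ∫ ω', Y ω' ∂P‖ ^ 2 ∂P ≤ ∫ ω, ‖Y ω‖ ^ 2 ∂P :=
        integral_norm_sub_integral_sq_le (MemLp.of_bound hY C hC)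
    _ ≤ ∫ _, C ^ 2 ∂P := integral_mono_ae ((MemLp.of_bound hY C hC).integrable_norm_pow
          two_ne_zero) (integrable_const _)
          (hC.mono fun _ hω => pow_le_pow_left₀ (norm_nonneg _) hω 2)
    _ = C ^ 2 := by simp

theorem integral_norm_const_add_smul_add_smul_sq_le {U V : Ω → E} (hU : MemLp U 2 P)
    (hV : MemLp V 2 P) (hU0 : ∫ ω, U ω ∂P = 0) (hV0 : ∫ ω, V ω ∂P = 0) (v : E) (a b : ℝ) :
    ∫ ω, ‖v + (a • U ω + b • V ω)‖ ^ 2 ∂P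
      ≤ ‖v‖ ^ 2 + 2 * a ^ 2 * ∫ ω, ‖U ω‖ ^ 2 ∂P + 2 * b ^ 2 * ∫ ω, ‖V ω‖ ^ 2 ∂P := by
  have hmean : ∫ ω, (a • U ω + b • V ω) ∂P = 0 := by
    rw [integral_add (f := fun ω => a • U ω) (g := fun ω => b • V ω)
      ((hU.integrable one_le_two).smul a) ((hV.integrable one_le_two).smul b),
      integral_smul, integral_smul, hU0, hV0]
    simp
  rw [integral_norm_const_add_sq (B := fun ω => a • U ω + b • V ω)
    ((hU.const_smul a).add (hV.const_smul b)) hmean v, add_assoc]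
  have h := integral_norm_add_sq_le (hU.const_smul a) (hV.const_smul b)
  simp only [Pi.smul_apply, norm_smul_sq, integral_const_mul] at h
  linarith

end SecondMoment

theorem integral_norm_storm_error_sq_le {Ξ E : Type*} [MeasurableSpace Ξ] {D : Measure Ξ}
    [IsProbabilityMeasure D] [NormedAddCommGroup E] [InnerProductSpace ℝ E] [CompleteSpace E]
    {gS : Ξ → E → E} {gf : E → E} {L σ α : ℝ} (hα : α ≠ 0)
    (hsmooth : ∀ ξ x y, ‖gS ξ x - gS ξ y‖ ≤ L * ‖x - y‖)
    (hunbiased : ∀ x, ∫ ξ, gS ξ x ∂D = gf x)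
    (hvar : ∀ x, ∫ ξ, ‖gS ξ x - gf x‖ ^ 2 ∂D ≤ σ ^ 2)
    (hmeas : ∀ x, AEStronglyMeasurable (fun ξ => gS ξ x) D) (x₀ x₁ c : E)
    (hint : Integrable (fun ξ => ‖gf x₁ - (gS ξ x₁ + (1 - α) • (c - gS ξ x₀))‖ ^ 2) D) :
    ∫ ξ, ‖gf x₁ - (gS ξ x₁ + (1 - α) • (c - gS ξ x₀))‖ ^ 2 ∂D
      ≤ (1 - α) ^ 2 * ‖gf x₀ - c‖ ^ 2 + 2 * (1 - α) ^ 2 * L ^ 2 * ‖x₁ - x₀‖ ^ 2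
        + 2 * α ^ 2 * σ ^ 2 := by
  set T := fun ξ => gf x₁ - (gS ξ x₁ + (1 - α) • (c - gS ξ x₀))
  set Y := fun ξ => gS ξ x₀ - gS ξ x₁
  set Z := fun ξ => Y ξ - (gf x₀ - gf x₁)
  set W := fun ξ => gS ξ x₁ - gf x₁
  have hdecomp : ∀ ξ, T ξ = (1 - α) • (gf x₀ - c) + ((1 - α) • Z ξ + (-α) • W ξ) := by
    intro ξ
    simp only [T, Z, Y, W]
    module
  have hYmeas : AEStronglyMeasurable Y D := (hmeas x₀).sub (hmeas x₁)
  have hYbound : ∀ᵐ ξ ∂D, ‖Y ξ‖ ≤ L * ‖x₀ - x₁‖ := ae_of_all _ fun ξ => hsmooth ξ x₀ x₁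
  have hY : MemLp Y 2 D := MemLp.of_bound hYmeas _ hYbound
  have hZ : MemLp Z 2 D := hY.sub (memLp_const _)
  -- `hvar` alone does not make `W` square integrable (its integral could be a junk `0`);
  -- this comes from `T`, since `α ≠ 0`.
  have hW : MemLp W 2 D := by
    have hT : MemLp T 2 D := (memLp_two_iff_integrable_sq_norm (aestronglyMeasurable_const.sub
      ((hmeas x₁).add ((aestronglyMeasurable_const.sub (hmeas x₀)).const_smul _)))).2 hint
    convert ((hT.sub (memLp_const ((1 - α) • (gf x₀ - c)))).sub
      (hZ.const_smul (1 - α))).const_smul (-α)⁻¹ using 1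
    ext1 ξ
    simp only [Pi.sub_apply, Pi.smul_apply]
    rw [hdecomp, add_sub_cancel_left, add_sub_cancel_left, smul_smul,
      inv_mul_cancel₀ (neg_ne_zero.2 hα), one_smul]
  have hgS₁ : Integrable (fun ξ => gS ξ x₁) D :=
    ((hW.integrable one_le_two).add (integrable_const (gf x₁))).congr
      (ae_of_all _ fun ξ => by simp [W])
  have hgS₀ : Integrable (fun ξ => gS ξ x₀) D :=
    ((hY.integrable one_le_two).add hgS₁).congr (ae_of_all _ fun ξ => by simp [Y])
  have hYmean : ∫ ξ, Y ξ ∂D = gf x₀ - gf x₁ := by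
    simp only [Y]
    rw [integral_sub hgS₀ hgS₁, hunbiased, hunbiased]
  have hZmean : ∫ ξ, Z ξ ∂D = 0 := by
    simp only [Z]
    rw [integral_sub (hY.integrable one_le_two) (integrable_const _), hYmean]
    simp
  have hWmean : ∫ ξ, W ξ ∂D = 0 := by
    simp only [W]
    rw [integral_sub hgS₁ (integrable_const _), hunbiased]
    simp
  have hZvar : ∫ ξ, ‖Z ξ‖ ^ 2 ∂D ≤ L ^ 2 * ‖x₁ - x₀‖ ^ 2 := by
    have h := integral_norm_sub_integral_sq_le_sq hYmeas hYbound
    rwa [hYmean, mul_pow, norm_sub_rev] at h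
  have h := integral_norm_const_add_smul_add_smul_sq_le hZ hW hZmean hWmean
    ((1 - α) • (gf x₀ - c)) (1 - α) (-α)
  simp_rw [← hdecomp, norm_smul_sq, neg_sq] at h
  have hZ' := mul_le_mul_of_nonneg_left hZvar (sq_nonneg (1 - α))
  have hW' := mul_le_mul_of_nonneg_left (hvar x₁) (sq_nonneg α)
  linarith

theorem IndepFun.integral_comp_le_of_forall_integral_le {Ω α β : Type*} [MeasurableSpace Ω]
    [MeasurableSpace α] [MeasurableSpace β] {P : Measure Ω} [IsFiniteMeasure P]
    {X : Ω → α} {Y : Ω → β} (hX : Measurable X) (hY : Measurable Y) (hXY : IndepFun X Y P)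
    {G : α × β → ℝ} (hG : Measurable G) (hGint : Integrable (fun ω => G (X ω, Y ω)) P)
    {R : α → ℝ} (hR : Measurable R) (hRint : Integrable (fun ω => R (X ω)) P)
    (hle : ∀ a, Integrable (fun b => G (a, b)) (P.map Y) → ∫ b, G (a, b) ∂(P.map Y) ≤ R a) :
    ∫ ω, G (X ω, Y ω) ∂P ≤ ∫ ω, R (X ω) ∂P := by
  have hmap : P.map (fun ω => (X ω, Y ω)) = (P.map X).prod (P.map Y) :=
    (indepFun_iff_map_prod_eq_prod_map_map hX.aemeasurable hY.aemeasurable).mp hXY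
  have hXY : Measurable fun ω => (X ω, Y ω) := hX.prodMk hY
  have hGint' : Integrable G ((P.map X).prod (P.map Y)) := by
    rw [← hmap, integrable_map_measure hG.aestronglyMeasurable hXY.aemeasurable]
    exact hGint
  rw [← integral_map hXY.aemeasurable hG.aestronglyMeasurable, hmap, integral_prod G hGint',
    ← integral_map hX.aemeasurable hR.aestronglyMeasurable]
  refine integral_mono_ae hGint'.integral_prod_left ?_ ?_
  · rwa [integrable_map_measure hR.aestronglyMeasurable hX.aemeasurable]
  · filter_upwards [hGint'.prod_right_ae] with a ha using hle a ha

theorem statement3_general {d : ℕ} {Ω : Type*} [MeasurableSpace Ω] (P : Measure Ω)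
    [IsProbabilityMeasure P] {Ξ : Type*} [MeasurableSpace Ξ] (D : Measure Ξ)
    [IsProbabilityMeasure D]
    (gS : Ξ → EuclideanSpace ℝ (Fin d) → EuclideanSpace ℝ (Fin d))
    (gf : EuclideanSpace ℝ (Fin d) → EuclideanSpace ℝ (Fin d))
    (L σ : ℝ)
    (hsmooth : ∀ ξ (x y : EuclideanSpace ℝ (Fin d)), ‖gS ξ x - gS ξ y‖ ≤ L * ‖x - y‖)
    (hunbiased : ∀ x, ∫ ξ, gS ξ x ∂D = gf x)
    (hvar : ∀ x, ∫ ξ, ‖gS ξ x - gf x‖ ^ 2 ∂D ≤ σ ^ 2)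
    (hgSmeas : Measurable (Function.uncurry gS))
    (xt xtil gt : Ω → EuclideanSpace ℝ (Fin d)) (ξ1 : Ω → Ξ)
    (hxtmeas : Measurable xt) (hxtilmeas : Measurable xtil)
    (hgtmeas : Measurable gt) (hξmeas : Measurable ξ1)
    (μ α : ℝ) (hα0 : 0 < α)
    (xt1 : Ω → EuclideanSpace ℝ (Fin d))
    (hxt1 : ∀ ω, xt1 ω = xt ω + μ • (xtil ω - xt ω))
    (hlaw : Measure.map ξ1 P = D)
    (hindep : IndepFun (fun ω => (xt ω, xtil ω, gt ω)) ξ1 P)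
    (gt1 : Ω → EuclideanSpace ℝ (Fin d))
    (hgt1 : ∀ ω, gt1 ω = gS (ξ1 ω) (xt1 ω) + (1 - α) • (gt ω - gS (ξ1 ω) (xt ω)))
    (hint0 : Integrable (fun ω => ‖gf (xt ω) - gt ω‖ ^ 2) P)
    (hint1 : Integrable (fun ω => ‖gf (xt1 ω) - gt1 ω‖ ^ 2) P)
    (hint2 : Integrable (fun ω => ‖xtil ω - xt ω‖ ^ 2) P) :
    ∫ ω, ‖gf (xt1 ω) - gt1 ω‖ ^ 2 ∂P
      ≤ (1 - α) ^ 2 * ∫ ω, ‖gf (xt ω) - gt ω‖ ^ 2 ∂P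
        + 2 * (1 - α) ^ 2 * L ^ 2 * μ ^ 2 * ∫ ω, ‖xtil ω - xt ω‖ ^ 2 ∂P
        + 2 * α ^ 2 * σ ^ 2 := by
  have hgS : Measurable fun q : Ξ × EuclideanSpace ℝ (Fin d) => gS q.1 q.2 := hgSmeas
  have hgf : Measurable gf := by
    simpa only [Function.comp_apply, Prod.swap_prod_mk, Function.uncurry_apply_pair, hunbiased]
      using ((hgSmeas.comp measurable_swap).stronglyMeasurable.integral_prod_right' (ν := D)).measurable
  let next : EuclideanSpace ℝ (Fin d) × EuclideanSpace ℝ (Fin d) × EuclideanSpace ℝ (Fin d) →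
      EuclideanSpace ℝ (Fin d) := fun p => p.1 + μ • (p.2.1 - p.1)
  let G := fun q : (EuclideanSpace ℝ (Fin d) × EuclideanSpace ℝ (Fin d) × EuclideanSpace ℝ (Fin d)) × Ξ =>
    ‖gf (next q.1) - (gS q.2 (next q.1) + (1 - α) • (q.1.2.2 - gS q.2 q.1.1))‖ ^ 2
  let R := fun p : EuclideanSpace ℝ (Fin d) × EuclideanSpace ℝ (Fin d) × EuclideanSpace ℝ (Fin d) =>
    (1 - α) ^ 2 * ‖gf p.1 - p.2.2‖ ^ 2 + 2 * (1 - α) ^ 2 * L ^ 2 * μ ^ 2 * ‖p.2.1 - p.1‖ ^ 2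
      + 2 * α ^ 2 * σ ^ 2
  have hGR : ∀ p, Integrable (fun ξ => G (p, ξ)) D → ∫ ξ, G (p, ξ) ∂D ≤ R p := fun p hp => by
    have h := integral_norm_storm_error_sq_le hα0.ne' hsmooth hunbiased hvar
      (fun x => (hgS.comp (measurable_id.prodMk measurable_const)).aestronglyMeasurable)
      p.1 (next p) p.2.2 hp
    simp only [next, add_sub_cancel_left, norm_smul_sq] at h
    exact h.trans_eq (by ring)
  have hlin : Integrable (fun ω => (1 - α) ^ 2 * ‖gf (xt ω) - gt ω‖ ^ 2
      + 2 * (1 - α) ^ 2 * L ^ 2 * μ ^ 2 * ‖xtil ω - xt ω‖ ^ 2) P :=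
    (hint0.const_mul _).add (hint2.const_mul _)
  calc ∫ ω, ‖gf (xt1 ω) - gt1 ω‖ ^ 2 ∂P = ∫ ω, G ((xt ω, xtil ω, gt ω), ξ1 ω) ∂P := by
        simp only [G, next, hxt1, hgt1]
    _ ≤ ∫ ω, R (xt ω, xtil ω, gt ω) ∂P := by
        refine IndepFun.integral_comp_le_of_forall_integral_le (by fun_prop) hξmeas hindep
          (by fun_prop) ?_ (by fun_prop) (hlin.add (integrable_const _)) (hlaw ▸ hGR)
        simpa only [G, next, hxt1, hgt1] using hint1
    _ = _ := by
        rw [integral_add hlin (integrable_const _),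
          integral_add (hint0.const_mul _) (hint2.const_mul _), integral_const_mul,
          integral_const_mul]
        simp

/-- Lemma 4 in SUPER-ADAM, variance bound of the STORM estimator:
with `f(x) = E_ξ[f(x;ξ)]`, each `f(·;ξ)` differentiable and `L`-smooth, unbiased
stochastic gradients with variance `≤ σ²`, random vectors `x_t, x̃_{t+1}, g_t`,
`0 < μ_t ≤ 1`, `0 < α_{t+1} ≤ 1`, `x_{t+1} = x_t + μ_t(x̃_{t+1} − x_t)`,
`ξ_{t+1} ∼ D` independent of `(x_t, x̃_{t+1}, g_t)`, and
`g_{t+1} = ∇f(x_{t+1};ξ_{t+1}) + (1 − α_{t+1})(g_t − ∇f(x_t;ξ_{t+1}))`, one has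
`E‖∇f(x_{t+1}) − g_{t+1}‖² ≤ (1 − α_{t+1})² E‖∇f(x_t) − g_t‖²
  + 2(1 − α_{t+1})² L² μ_t² E‖x̃_{t+1} − x_t‖² + 2 α_{t+1}² σ²`. -/
theorem statement3 {d : ℕ} {Ω : Type*} [MeasurableSpace Ω] (P : Measure Ω)
    [IsProbabilityMeasure P] {Ξ : Type*} [MeasurableSpace Ξ] (D : Measure Ξ)
    [IsProbabilityMeasure D]
    (fS : Ξ → EuclideanSpace ℝ (Fin d) → ℝ)
    (gS : Ξ → EuclideanSpace ℝ (Fin d) → EuclideanSpace ℝ (Fin d))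
    (f : EuclideanSpace ℝ (Fin d) → ℝ)
    (gf : EuclideanSpace ℝ (Fin d) → EuclideanSpace ℝ (Fin d))
    (L σ : ℝ) (hL : 0 < L) (hσ : 0 ≤ σ)
    (hf : ∀ x, f x = ∫ ξ, fS ξ x ∂D)
    (hgS : ∀ ξ x, HasGradientAt (fS ξ) (gS ξ x) x)
    (hgf : ∀ x, HasGradientAt f (gf x) x)
    (hsmooth : ∀ ξ (x y : EuclideanSpace ℝ (Fin d)), ‖gS ξ x - gS ξ y‖ ≤ L * ‖x - y‖)
    (hunbiased : ∀ x, ∫ ξ, gS ξ x ∂D = gf x)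
    (hvar : ∀ x, ∫ ξ, ‖gS ξ x - gf x‖ ^ 2 ∂D ≤ σ ^ 2)
    (hgSmeas : Measurable (Function.uncurry gS))
    (xt xtil gt : Ω → EuclideanSpace ℝ (Fin d)) (ξ1 : Ω → Ξ)
    (hxtmeas : Measurable xt) (hxtilmeas : Measurable xtil)
    (hgtmeas : Measurable gt) (hξmeas : Measurable ξ1)
    (μ α : ℝ) (hμ0 : 0 < μ) (hμ1 : μ ≤ 1) (hα0 : 0 < α) (hα1 : α ≤ 1)
    (xt1 : Ω → EuclideanSpace ℝ (Fin d))
    (hxt1 : ∀ ω, xt1 ω = xt ω + μ • (xtil ω - xt ω))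
    (hlaw : Measure.map ξ1 P = D)
    (hindep : IndepFun (fun ω => (xt ω, xtil ω, gt ω)) ξ1 P)
    (gt1 : Ω → EuclideanSpace ℝ (Fin d))
    (hgt1 : ∀ ω, gt1 ω = gS (ξ1 ω) (xt1 ω) + (1 - α) • (gt ω - gS (ξ1 ω) (xt ω)))
    (hint0 : Integrable (fun ω => ‖gf (xt ω) - gt ω‖ ^ 2) P)
    (hint1 : Integrable (fun ω => ‖gf (xt1 ω) - gt1 ω‖ ^ 2) P)
    (hint2 : Integrable (fun ω => ‖xtil ω - xt ω‖ ^ 2) P) :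
    ∫ ω, ‖gf (xt1 ω) - gt1 ω‖ ^ 2 ∂P
      ≤ (1 - α) ^ 2 * ∫ ω, ‖gf (xt ω) - gt ω‖ ^ 2 ∂P
        + 2 * (1 - α) ^ 2 * L ^ 2 * μ ^ 2 * ∫ ω, ‖xtil ω - xt ω‖ ^ 2 ∂P
        + 2 * α ^ 2 * σ ^ 2 :=
  statement3_general P D gS gf L σ hsmooth hunbiased hvar hgSmeas xt xtil gt ξ1 hxtmeas hxtilmeas
    hgtmeas hξmeas μ α hα0 xt1 hxt1 hlaw hindep gt1 hgt1 hint0 hint1 hint2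
end

section
/- Let f(x) = E_{ξ∼D}[f(x;ξ)] be differentiable and L-smooth, with E_ξ[∇f(x;ξ)] = ∇f(x) and E_ξ‖∇f(x;ξ) − ∇f(x)‖² ≤ σ² for all x. Let x_t, x̃_{t+1}, g_t be random vectors in ℝ^d, let 0 < μ_t ≤ 1 and 0 < α_{t+1} ≤ 1, set x_{t+1} = x_t + μ_t (x̃_{t+1} − x_t), let ξ_{t+1} ∼ D be independent of (x_t, x̃_{t+1}, g_t), and define g_{t+1} = (1 − α_{t+1}) g_t + α_{t+1} ∇f(x_{t+1}; ξ_{t+1}). Then E‖∇f(x_{t+1}) − g_{t+1}‖² ≤ (1 − α_{t+1}) E‖∇f(x_t) − g_t‖² + (1/α_{t+1}) L² μ_t² E‖x̃_{t+1} − x_t‖² + α_{t+1}² σ². -/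
/-!
The new error splits as `(1 - α) • (∇f(x_{t+1}) - g_t)` plus the noise
`α • (∇f(x_{t+1}) - ∇f(x_{t+1}; ξ_{t+1}))`. Since `ξ_{t+1}` is independent of the state
`(x_t, x̃_{t+1}, g_t)`, one may integrate over `ξ` first with the state frozen; the noise then has
mean zero, so the cross term vanishes and the noise contributes at most `α² σ²`. The bias is
handled by writing `∇f(x_{t+1}) - g_t = (∇f(x_t) - g_t) + (∇f(x_{t+1}) - ∇f(x_t))`, the weighted
inequality `(1 - α)² ‖a + b‖² ≤ (1 - α) ‖a‖² + ‖b‖² / α`, and `L`-smoothness together with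
`x_{t+1} - x_t = μ (x̃_{t+1} - x_t)`.
-/

open scoped RealInnerProductSpace
open MeasureTheory ProbabilityTheory

theorem one_sub_sq_mul_add_sq_le {α : ℝ} (hα0 : 0 < α) (hα1 : α ≤ 1) (u v : ℝ) :
    (1 - α) ^ 2 * (u + v) ^ 2 ≤ (1 - α) * u ^ 2 + 1 / α * v ^ 2 := by
  have key : α * ((1 - α) * u ^ 2 + 1 / α * v ^ 2 - (1 - α) ^ 2 * (u + v) ^ 2)
      = (1 - α) * (α * u - (1 - α) * v) ^ 2 + α * (2 - α) * v ^ 2 := by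
    field_simp
    ring
  have h1 : 0 ≤ 1 - α := by linarith
  have h2 : 0 ≤ 2 - α := by linarith
  rw [← sub_nonneg]
  refine nonneg_of_mul_nonneg_right (a := α) ?_ hα0
  rw [key]
  positivity

theorem norm_one_sub_smul_add_sq_le {E : Type*} [SeminormedAddCommGroup E] [NormedSpace ℝ E]
    {α : ℝ} (hα0 : 0 < α) (hα1 : α ≤ 1) (a b : E) :
    ‖(1 - α) • (a + b)‖ ^ 2 ≤ (1 - α) * ‖a‖ ^ 2 + 1 / α * ‖b‖ ^ 2 :=
  calc ‖(1 - α) • (a + b)‖ ^ 2 = (1 - α) ^ 2 * ‖a + b‖ ^ 2 := by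
        rw [norm_smul, mul_pow, Real.norm_eq_abs, sq_abs]
    _ ≤ (1 - α) ^ 2 * (‖a‖ + ‖b‖) ^ 2 := by gcongr; exact norm_add_le a b
    _ ≤ (1 - α) * ‖a‖ ^ 2 + 1 / α * ‖b‖ ^ 2 := one_sub_sq_mul_add_sq_le hα0 hα1 _ _

section Integral

variable {E : Type*} [NormedAddCommGroup E] [InnerProductSpace ℝ E] [CompleteSpace E]
  {Ξ : Type*} [MeasurableSpace Ξ] {D : Measure Ξ} [IsProbabilityMeasure D]

theorem integral_norm_add_sq_of_integral_eq_zero (c : E) {N : Ξ → E} (hN : MemLp N 2 D)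
    (hmean : ∫ ξ, N ξ ∂D = 0) :
    ∫ ξ, ‖c + N ξ‖ ^ 2 ∂D = ‖c‖ ^ 2 + ∫ ξ, ‖N ξ‖ ^ 2 ∂D := by
  have hN1 : Integrable N D := hN.integrable one_le_two
  have hN2 : Integrable (fun ξ => ‖N ξ‖ ^ 2) D := (memLp_two_iff_integrable_sq_norm hN.1).1 hN
  have hcross : Integrable (fun ξ => 2 * ⟪c, N ξ⟫) D := (hN1.const_inner c).const_mul 2
  calc ∫ ξ, ‖c + N ξ‖ ^ 2 ∂D = ∫ ξ, (‖c‖ ^ 2 + 2 * ⟪c, N ξ⟫ + ‖N ξ‖ ^ 2) ∂D := by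
        simp_rw [norm_add_sq_real]
    _ = ‖c‖ ^ 2 + 2 * ⟪c, ∫ ξ, N ξ ∂D⟫ + ∫ ξ, ‖N ξ‖ ^ 2 ∂D := by
        rw [integral_add ((integrable_const _).fun_add hcross) hN2,
          integral_add (integrable_const _) hcross, integral_const, probReal_univ, one_smul,
          integral_const_mul, integral_inner hN1]
    _ = ‖c‖ ^ 2 + ∫ ξ, ‖N ξ‖ ^ 2 ∂D := by rw [hmean, inner_zero_right, mul_zero, add_zero]

theorem integral_norm_sub_momentum_sq_le {G : Ξ → E} {m g : E} {σ α : ℝ} (hα : α ≠ 0)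
    (hG : AEStronglyMeasurable G D) (hmean : ∫ ξ, G ξ ∂D = m)
    (hvar : ∫ ξ, ‖G ξ - m‖ ^ 2 ∂D ≤ σ ^ 2)
    (hint : Integrable (fun ξ => ‖m - ((1 - α) • g + α • G ξ)‖ ^ 2) D) :
    ∫ ξ, ‖m - ((1 - α) • g + α • G ξ)‖ ^ 2 ∂D ≤ ‖(1 - α) • (m - g)‖ ^ 2 + α ^ 2 * σ ^ 2 := by
  have hsplit : ∀ ξ, m - ((1 - α) • g + α • G ξ) = (1 - α) • (m - g) + α • (m - G ξ) := by
    intro ξ; module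
  -- `G` is square-integrable because `α • G` differs from the integrand of `hint` by a constant.
  have hαG : MemLp (fun ξ => α • G ξ) 2 D := by
    have hsum : MemLp (fun ξ => m - ((1 - α) • g + α • G ξ)) 2 D :=
      (memLp_two_iff_integrable_sq_norm (by fun_prop)).2 hint
    convert (memLp_const (m - (1 - α) • g)).sub hsum using 1
    funext ξ
    simp only [Pi.sub_apply]
    module
  have hG2 : MemLp G 2 D := by
    convert hαG.const_smul α⁻¹ using 1
    funext ξ
    exact (inv_smul_smul₀ hα (G ξ)).symm
  have hnoise : MemLp (fun ξ => α • (m - G ξ)) 2 D := ((memLp_const m).sub hG2).const_smul α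
  have hnoise_mean : ∫ ξ, α • (m - G ξ) ∂D = 0 := by
    rw [integral_smul, integral_sub (integrable_const m) (hG2.integrable one_le_two),
      integral_const, probReal_univ, one_smul, hmean, sub_self, smul_zero]
  simp_rw [hsplit]
  rw [integral_norm_add_sq_of_integral_eq_zero _ hnoise hnoise_mean]
  gcongr
  calc ∫ ξ, ‖α • (m - G ξ)‖ ^ 2 ∂D = α ^ 2 * ∫ ξ, ‖G ξ - m‖ ^ 2 ∂D := by
        simp_rw [norm_smul, mul_pow, Real.norm_eq_abs, sq_abs, norm_sub_rev m]
        exact integral_const_mul _ _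
    _ ≤ α ^ 2 * σ ^ 2 := by gcongr

theorem integral_norm_sub_momentum_step_sq_le {gf : E → E} {gS : Ξ → E → E} {L σ μ α : ℝ}
    (hα0 : 0 < α) (hα1 : α ≤ 1) (hsmooth : ∀ x y, ‖gf x - gf y‖ ≤ L * ‖x - y‖)
    (hgS : ∀ y, AEStronglyMeasurable (fun ξ => gS ξ y) D)
    (hunbiased : ∀ y, ∫ ξ, gS ξ y ∂D = gf y) (hvar : ∀ y, ∫ ξ, ‖gS ξ y - gf y‖ ^ 2 ∂D ≤ σ ^ 2)
    (x xtil g : E)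
    (hint : Integrable
      (fun ξ => ‖gf (x + μ • (xtil - x)) - ((1 - α) • g + α • gS ξ (x + μ • (xtil - x)))‖ ^ 2) D) :
    ∫ ξ, ‖gf (x + μ • (xtil - x)) - ((1 - α) • g + α • gS ξ (x + μ • (xtil - x)))‖ ^ 2 ∂D
      ≤ (1 - α) * ‖gf x - g‖ ^ 2 + 1 / α * L ^ 2 * μ ^ 2 * ‖xtil - x‖ ^ 2 + α ^ 2 * σ ^ 2 := by
  set y := x + μ • (xtil - x)
  have hdrift : ‖gf y - gf x‖ ^ 2 ≤ L ^ 2 * μ ^ 2 * ‖xtil - x‖ ^ 2 :=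
    calc ‖gf y - gf x‖ ^ 2 ≤ (L * ‖y - x‖) ^ 2 := by gcongr; exact hsmooth y x
      _ = L ^ 2 * μ ^ 2 * ‖xtil - x‖ ^ 2 := by
        rw [add_sub_cancel_left, norm_smul, Real.norm_eq_abs, mul_pow, mul_pow, sq_abs, mul_assoc]
  calc _ ≤ ‖(1 - α) • (gf y - g)‖ ^ 2 + α ^ 2 * σ ^ 2 :=
        integral_norm_sub_momentum_sq_le hα0.ne' (hgS y) (hunbiased y) (hvar y) hint
    _ = ‖(1 - α) • ((gf x - g) + (gf y - gf x))‖ ^ 2 + α ^ 2 * σ ^ 2 := by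
        rw [sub_add_sub_cancel']
    _ ≤ (1 - α) * ‖gf x - g‖ ^ 2 + 1 / α * ‖gf y - gf x‖ ^ 2 + α ^ 2 * σ ^ 2 := by
        gcongr; exact norm_one_sub_smul_add_sq_le hα0 hα1 _ _
    _ ≤ (1 - α) * ‖gf x - g‖ ^ 2 + 1 / α * L ^ 2 * μ ^ 2 * ‖xtil - x‖ ^ 2 + α ^ 2 * σ ^ 2 := by
        have := mul_le_mul_of_nonneg_left hdrift (one_div_pos.2 hα0).le
        linarith

end Integral

theorem integral_comp_prod_le_of_indepFun {Ω S Ξ : Type*} [MeasurableSpace Ω] [MeasurableSpace S]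
    [MeasurableSpace Ξ] {P : Measure Ω} [IsFiniteMeasure P] {D : Measure Ξ} {X : Ω → S}
    {ξ : Ω → Ξ} (hX : Measurable X) (hξ : Measurable ξ) (hind : IndepFun X ξ P)
    (hlaw : P.map ξ = D) {F : S × Ξ → ℝ} {G : S → ℝ} (hF : Measurable F) (hG : Measurable G)
    (hFint : Integrable (fun ω => F (X ω, ξ ω)) P) (hGint : Integrable (fun ω => G (X ω)) P)
    (hle : ∀ s, Integrable (fun e => F (s, e)) D → ∫ e, F (s, e) ∂D ≤ G s) :
    ∫ ω, F (X ω, ξ ω) ∂P ≤ ∫ ω, G (X ω) ∂P := by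
  subst hlaw
  have hjoint : P.map (fun ω => (X ω, ξ ω)) = (P.map X).prod (P.map ξ) :=
    (indepFun_iff_map_prod_eq_prod_map_map hX.aemeasurable hξ.aemeasurable).1 hind
  have hXξ : AEMeasurable (fun ω => (X ω, ξ ω)) P := (hX.prodMk hξ).aemeasurable
  have hFint' : Integrable F ((P.map X).prod (P.map ξ)) := by
    rw [← hjoint]; exact (integrable_map_measure hF.aestronglyMeasurable hXξ).2 hFint
  have hGint' : Integrable G (P.map X) :=
    (integrable_map_measure hG.aestronglyMeasurable hX.aemeasurable).2 hGint
  calc ∫ ω, F (X ω, ξ ω) ∂P = ∫ p, F p ∂((P.map X).prod (P.map ξ)) := by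
        rw [← hjoint, integral_map hXξ hF.aestronglyMeasurable]
    _ = ∫ s, ∫ e, F (s, e) ∂(P.map ξ) ∂(P.map X) := integral_prod F hFint'
    _ ≤ ∫ s, G s ∂(P.map X) :=
        integral_mono_ae hFint'.integral_prod_left hGint' (hFint'.prod_right_ae.mono hle)
    _ = ∫ ω, G (X ω) ∂P := integral_map hX.aemeasurable hG.aestronglyMeasurable

theorem statement4_general {d : ℕ} {Ω : Type*} [MeasurableSpace Ω] (P : Measure Ω)
    [IsProbabilityMeasure P] {Ξ : Type*} [MeasurableSpace Ξ] (D : Measure Ξ)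
    [IsProbabilityMeasure D]
    (gS : Ξ → EuclideanSpace ℝ (Fin d) → EuclideanSpace ℝ (Fin d))
    (gf : EuclideanSpace ℝ (Fin d) → EuclideanSpace ℝ (Fin d))
    (L σ : ℝ)
    (hsmooth : ∀ x y : EuclideanSpace ℝ (Fin d), ‖gf x - gf y‖ ≤ L * ‖x - y‖)
    (hunbiased : ∀ x, ∫ ξ, gS ξ x ∂D = gf x)
    (hvar : ∀ x, ∫ ξ, ‖gS ξ x - gf x‖ ^ 2 ∂D ≤ σ ^ 2)
    (hgSmeas : Measurable (Function.uncurry gS))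
    (xt xtil gt : Ω → EuclideanSpace ℝ (Fin d)) (ξ1 : Ω → Ξ)
    (hxtmeas : Measurable xt) (hxtilmeas : Measurable xtil)
    (hgtmeas : Measurable gt) (hξmeas : Measurable ξ1)
    (μ α : ℝ) (hα0 : 0 < α) (hα1 : α ≤ 1)
    (xt1 : Ω → EuclideanSpace ℝ (Fin d))
    (hxt1 : ∀ ω, xt1 ω = xt ω + μ • (xtil ω - xt ω))
    (hlaw : Measure.map ξ1 P = D)
    (hindep : IndepFun (fun ω => (xt ω, xtil ω, gt ω)) ξ1 P)
    (gt1 : Ω → EuclideanSpace ℝ (Fin d))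
    (hgt1 : ∀ ω, gt1 ω = (1 - α) • gt ω + α • gS (ξ1 ω) (xt1 ω))
    (hint0 : Integrable (fun ω => ‖gf (xt ω) - gt ω‖ ^ 2) P)
    (hint1 : Integrable (fun ω => ‖gf (xt1 ω) - gt1 ω‖ ^ 2) P)
    (hint2 : Integrable (fun ω => ‖xtil ω - xt ω‖ ^ 2) P) :
    ∫ ω, ‖gf (xt1 ω) - gt1 ω‖ ^ 2 ∂P
      ≤ (1 - α) * ∫ ω, ‖gf (xt ω) - gt ω‖ ^ 2 ∂P
        + (1 / α) * L ^ 2 * μ ^ 2 * ∫ ω, ‖xtil ω - xt ω‖ ^ 2 ∂P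
        + α ^ 2 * σ ^ 2 := by
  obtain rfl : xt1 = _ := funext hxt1
  obtain rfl : gt1 = _ := funext hgt1
  have hgf : Measurable gf :=
    (LipschitzWith.of_dist_le' (K := L) fun x y => by
      simpa only [dist_eq_norm] using hsmooth x y).continuous.measurable
  have hA : Integrable (fun ω => (1 - α) * ‖gf (xt ω) - gt ω‖ ^ 2) P := hint0.const_mul _
  have hB : Integrable (fun ω => 1 / α * L ^ 2 * μ ^ 2 * ‖xtil ω - xt ω‖ ^ 2) P :=
    hint2.const_mul _
  calc _ ≤ ∫ ω, ((1 - α) * ‖gf (xt ω) - gt ω‖ ^ 2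
          + 1 / α * L ^ 2 * μ ^ 2 * ‖xtil ω - xt ω‖ ^ 2 + α ^ 2 * σ ^ 2) ∂P := by
        refine integral_comp_prod_le_of_indepFun (hxtmeas.prodMk (hxtilmeas.prodMk hgtmeas))
          hξmeas hindep hlaw
          (F := fun p => ‖gf (p.1.1 + μ • (p.1.2.1 - p.1.1))
            - ((1 - α) • p.1.2.2 + α • gS p.2 (p.1.1 + μ • (p.1.2.1 - p.1.1)))‖ ^ 2)
          (G := fun q => (1 - α) * ‖gf q.1 - q.2.2‖ ^ 2
            + 1 / α * L ^ 2 * μ ^ 2 * ‖q.2.1 - q.1‖ ^ 2 + α ^ 2 * σ ^ 2)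
          (by fun_prop) (by fun_prop) hint1 ((hA.add hB).add (integrable_const _)) ?_
        rintro ⟨x, x', g⟩
        exact integral_norm_sub_momentum_step_sq_le hα0 hα1 hsmooth
          (fun _ => (hgSmeas.comp measurable_prodMk_right).aestronglyMeasurable) hunbiased hvar
          x x' g
    _ = (1 - α) * ∫ ω, ‖gf (xt ω) - gt ω‖ ^ 2 ∂P
        + (1 / α) * L ^ 2 * μ ^ 2 * ∫ ω, ‖xtil ω - xt ω‖ ^ 2 ∂P + α ^ 2 * σ ^ 2 := by
        rw [integral_add (hA.fun_add hB) (integrable_const _), integral_add hA hB,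
          integral_const_mul, integral_const_mul, integral_const, probReal_univ, one_smul]

/-- Lemma 6 in SUPER-ADAM, variance bound of the momentum estimator:
with `f(x) = E_ξ[f(x;ξ)]` differentiable and `L`-smooth, unbiased stochastic
gradients with variance `≤ σ²`, random vectors `x_t, x̃_{t+1}, g_t`, `0 < μ_t ≤ 1`,
`0 < α_{t+1} ≤ 1`, `x_{t+1} = x_t + μ_t(x̃_{t+1} − x_t)`, `ξ_{t+1} ∼ D` independent of
`(x_t, x̃_{t+1}, g_t)`, and `g_{t+1} = (1 − α_{t+1}) g_t + α_{t+1} ∇f(x_{t+1};ξ_{t+1})`,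
one has `E‖∇f(x_{t+1}) − g_{t+1}‖² ≤ (1 − α_{t+1}) E‖∇f(x_t) − g_t‖²
  + (1/α_{t+1}) L² μ_t² E‖x̃_{t+1} − x_t‖² + α_{t+1}² σ²`. -/
theorem statement4 {d : ℕ} {Ω : Type*} [MeasurableSpace Ω] (P : Measure Ω)
    [IsProbabilityMeasure P] {Ξ : Type*} [MeasurableSpace Ξ] (D : Measure Ξ)
    [IsProbabilityMeasure D]
    (fS : Ξ → EuclideanSpace ℝ (Fin d) → ℝ)
    (gS : Ξ → EuclideanSpace ℝ (Fin d) → EuclideanSpace ℝ (Fin d))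
    (f : EuclideanSpace ℝ (Fin d) → ℝ)
    (gf : EuclideanSpace ℝ (Fin d) → EuclideanSpace ℝ (Fin d))
    (L σ : ℝ) (hL : 0 < L) (hσ : 0 ≤ σ)
    (hf : ∀ x, f x = ∫ ξ, fS ξ x ∂D)
    (hgS : ∀ ξ x, HasGradientAt (fS ξ) (gS ξ x) x)
    (hgf : ∀ x, HasGradientAt f (gf x) x)
    (hsmooth : ∀ x y : EuclideanSpace ℝ (Fin d), ‖gf x - gf y‖ ≤ L * ‖x - y‖)
    (hunbiased : ∀ x, ∫ ξ, gS ξ x ∂D = gf x)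
    (hvar : ∀ x, ∫ ξ, ‖gS ξ x - gf x‖ ^ 2 ∂D ≤ σ ^ 2)
    (hgSmeas : Measurable (Function.uncurry gS))
    (xt xtil gt : Ω → EuclideanSpace ℝ (Fin d)) (ξ1 : Ω → Ξ)
    (hxtmeas : Measurable xt) (hxtilmeas : Measurable xtil)
    (hgtmeas : Measurable gt) (hξmeas : Measurable ξ1)
    (μ α : ℝ) (hμ0 : 0 < μ) (hμ1 : μ ≤ 1) (hα0 : 0 < α) (hα1 : α ≤ 1)
    (xt1 : Ω → EuclideanSpace ℝ (Fin d))
    (hxt1 : ∀ ω, xt1 ω = xt ω + μ • (xtil ω - xt ω))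
    (hlaw : Measure.map ξ1 P = D)
    (hindep : IndepFun (fun ω => (xt ω, xtil ω, gt ω)) ξ1 P)
    (gt1 : Ω → EuclideanSpace ℝ (Fin d))
    (hgt1 : ∀ ω, gt1 ω = (1 - α) • gt ω + α • gS (ξ1 ω) (xt1 ω))
    (hint0 : Integrable (fun ω => ‖gf (xt ω) - gt ω‖ ^ 2) P)
    (hint1 : Integrable (fun ω => ‖gf (xt1 ω) - gt1 ω‖ ^ 2) P)
    (hint2 : Integrable (fun ω => ‖xtil ω - xt ω‖ ^ 2) P) :
    ∫ ω, ‖gf (xt1 ω) - gt1 ω‖ ^ 2 ∂P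
      ≤ (1 - α) * ∫ ω, ‖gf (xt ω) - gt ω‖ ^ 2 ∂P
        + (1 / α) * L ^ 2 * μ ^ 2 * ∫ ω, ‖xtil ω - xt ω‖ ^ 2 ∂P
        + α ^ 2 * σ ^ 2 :=
  statement4_general P D gS gf L σ hsmooth hunbiased hvar hgSmeas xt xtil gt ξ1 hxtmeas hxtilmeas
    hgtmeas hξmeas μ α hα0 hα1 xt1 hxt1 hlaw hindep gt1 hgt1 hint0 hint1 hint2
end

section
/- Under the hypotheses: f(x) = E_{ξ∼D}[f(x;ξ)] with each f(·;ξ) differentiable and L-smooth, unbiased stochastic gradients with variance ≤ σ², constants k > 0, m ≥ max(3/2, k³), ρ > 0, γ > 0, c ≥ 1/k³ + 10 L² γ²/ρ², μ_t = k/(m+t)^{1/3}, α_{t+1} = c μ_t² with 0 < α_{t+1} ≤ 1; random vectors x_t, x̃_{t+1}, g_t with x_{t+1} = x_t + μ_t (x̃_{t+1} − x_t), ξ_{t+1} ∼ D independent of (x_t, x̃_{t+1}, g_t), and g_{t+1} = ∇f(x_{t+1}; ξ_{t+1}) + (1 − α_{t+1}) (g_t − ∇f(x_t; ξ_{t+1})):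 for every t ≥ 1, (1/μ_t) E‖∇f(x_{t+1}) − g_{t+1}‖² − (1/μ_{t−1}) E‖∇f(x_t) − g_t‖² ≤ −(10 L² γ²/ρ²) μ_t E‖∇f(x_t) − g_t‖² + 2 L² μ_t E‖x̃_{t+1} − x_t‖² + 2 c² μ_t³ σ². -/
/-!
Condition on the state `(x_t, x̃_{t+1}, g_t)`, which is independent of the fresh sample `ξ`.
With `a = α_{t+1}`, the new error splits as
`∇f(x_{t+1}) - g_{t+1} = (1 - a) (∇f(x_t) - g_t) + B`,
`B = -a (∇f(x_{t+1}; ξ) - ∇f(x_{t+1})) - (1 - a) (Z - E Z)`, `Z = ∇f(x_{t+1}; ξ) - ∇f(x_t; ξ)`.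
The noise `B` has conditional mean zero, so the cross term vanishes, and
`E‖B‖² ≤ 2a²σ² + 2(1 - a)² E‖Z‖² ≤ 2a²σ² + 2(1 - a)² L² μ_t² ‖x̃_{t+1} - x_t‖²` by smoothness.
Dividing by `μ_t`, it remains to check the scalar inequality
`(1 - a)² / μ_t ≤ 1 / μ_{t-1} - (10 L² γ² / ρ²) μ_t`; it follows from `c ≥ 1/k³ + 10 L² γ² / ρ²`
and `(m + t)^{1/3} - (m + t - 1)^{1/3} ≤ 1 / ((m + t)^{1/3} (m + t - 1)^{1/3})`.
-/

open scoped RealInnerProductSpace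
open MeasureTheory ProbabilityTheory

section SecondMoment

variable {Ξ E : Type*} [MeasurableSpace Ξ] {μ : Measure Ξ} [IsProbabilityMeasure μ]
  [NormedAddCommGroup E] [InnerProductSpace ℝ E] [CompleteSpace E]

theorem integral_norm_add_sq_of_integral_eq_zero_s7 (e : E) {B : Ξ → E} (hB : MemLp B 2 μ)
    (hB0 : ∫ ξ, B ξ ∂μ = 0) :
    ∫ ξ, ‖e + B ξ‖ ^ 2 ∂μ = ‖e‖ ^ 2 + ∫ ξ, ‖B ξ‖ ^ 2 ∂μ := by
  have hBi : Integrable B μ := hB.integrable one_le_two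
  have hcross : Integrable (fun ξ => 2 * ⟪e, B ξ⟫) μ := (hBi.const_inner e).const_mul 2
  have hfirst : Integrable (fun ξ => ‖e‖ ^ 2 + 2 * ⟪e, B ξ⟫) μ := (integrable_const _).add hcross
  simp_rw [norm_add_sq_real]
  rw [integral_add hfirst (hB.integrable_norm_pow two_ne_zero),
    integral_add (integrable_const _) hcross, integral_const, integral_const_mul,
    integral_inner hBi, hB0]
  simp

theorem integral_norm_sub_integral_sq_le_s7 {X : Ξ → E} (hX : MemLp X 2 μ) :
    ∫ ξ, ‖X ξ - ∫ ξ', X ξ' ∂μ‖ ^ 2 ∂μ ≤ ∫ ξ, ‖X ξ‖ ^ 2 ∂μ := by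
  have hXi : Integrable X μ := hX.integrable one_le_two
  have hdecomp := integral_norm_add_sq_of_integral_eq_zero_s7 (∫ ξ, X ξ ∂μ)
    (hX.sub (memLp_const (∫ ξ, X ξ ∂μ))) (by simp [integral_sub hXi (integrable_const _)])
  simp only [Pi.sub_apply, add_sub_cancel] at hdecomp
  rw [hdecomp]
  exact le_add_of_nonneg_left (sq_nonneg _)

theorem integral_norm_storm_noise_sq_le {U W : Ξ → E} {u w : E} {a δ σ : ℝ}
    (hUi : Integrable U μ) (hWi : Integrable W μ) (hUc : MemLp (fun ξ => U ξ - u) 2 μ)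
    (hUW : ∀ ξ, ‖U ξ - W ξ‖ ≤ δ) (hU : ∫ ξ, U ξ ∂μ = u) (hW : ∫ ξ, W ξ ∂μ = w)
    (hvar : ∫ ξ, ‖U ξ - u‖ ^ 2 ∂μ ≤ σ ^ 2) (ha0 : 0 ≤ a) (ha1 : a ≤ 1) :
    ∫ ξ, ‖(u - U ξ) + (1 - a) • (W ξ - w)‖ ^ 2 ∂μ
      ≤ 2 * (1 - a) ^ 2 * δ ^ 2 + 2 * a ^ 2 * σ ^ 2 := by
  have hD : MemLp (fun ξ => U ξ - W ξ) 2 μ :=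
    MemLp.of_bound (hUi.1.sub hWi.1) δ (ae_of_all _ hUW)
  have hpt : ∀ ξ, ‖(u - U ξ) + (1 - a) • (W ξ - w)‖ ^ 2
      ≤ 2 * (1 - a) ^ 2 * ‖(U ξ - W ξ) - (u - w)‖ ^ 2 + 2 * a ^ 2 * ‖U ξ - u‖ ^ 2 := by
    intro ξ
    have hsplit : (u - U ξ) + (1 - a) • (W ξ - w)
        = -((1 - a) • ((U ξ - W ξ) - (u - w)) + a • (U ξ - u)) := by module
    calc ‖(u - U ξ) + (1 - a) • (W ξ - w)‖ ^ 2
        ≤ (‖(1 - a) • ((U ξ - W ξ) - (u - w))‖ + ‖a • (U ξ - u)‖) ^ 2 := by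
          rw [hsplit, norm_neg]; gcongr; exact norm_add_le _ _
      _ ≤ 2 * (‖(1 - a) • ((U ξ - W ξ) - (u - w))‖ ^ 2 + ‖a • (U ξ - u)‖ ^ 2) := add_sq_le
      _ = _ := by
          rw [norm_smul, norm_smul, Real.norm_of_nonneg (by linarith), Real.norm_of_nonneg ha0]
          ring
  have hDc2 : Integrable (fun ξ => 2 * (1 - a) ^ 2 * ‖(U ξ - W ξ) - (u - w)‖ ^ 2) μ :=
    ((hD.sub (memLp_const (u - w))).integrable_norm_pow two_ne_zero).const_mul _
  have hUc2 : Integrable (fun ξ => 2 * a ^ 2 * ‖U ξ - u‖ ^ 2) μ :=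
    (hUc.integrable_norm_pow two_ne_zero).const_mul _
  have hD2 : ∫ ξ, ‖U ξ - W ξ‖ ^ 2 ∂μ ≤ δ ^ 2 := by
    calc ∫ ξ, ‖U ξ - W ξ‖ ^ 2 ∂μ ≤ ∫ _, δ ^ 2 ∂μ :=
          integral_mono (hD.integrable_norm_pow two_ne_zero) (integrable_const _)
            fun ξ => pow_le_pow_left₀ (norm_nonneg _) (hUW ξ) 2
      _ = δ ^ 2 := by simp
  have hcentered := integral_norm_sub_integral_sq_le_s7 hD
  rw [integral_sub hUi hWi, hU, hW] at hcentered
  calc ∫ ξ, ‖(u - U ξ) + (1 - a) • (W ξ - w)‖ ^ 2 ∂μ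
      ≤ ∫ ξ, (2 * (1 - a) ^ 2 * ‖(U ξ - W ξ) - (u - w)‖ ^ 2 + 2 * a ^ 2 * ‖U ξ - u‖ ^ 2) ∂μ :=
        integral_mono_of_nonneg (ae_of_all _ fun _ => sq_nonneg _) (hDc2.add hUc2)
          (ae_of_all _ hpt)
    _ = 2 * (1 - a) ^ 2 * ∫ ξ, ‖(U ξ - W ξ) - (u - w)‖ ^ 2 ∂μ
          + 2 * a ^ 2 * ∫ ξ, ‖U ξ - u‖ ^ 2 ∂μ := by
        rw [integral_add hDc2 hUc2, integral_const_mul, integral_const_mul]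
    _ ≤ 2 * (1 - a) ^ 2 * δ ^ 2 + 2 * a ^ 2 * σ ^ 2 := by
        gcongr
        exact hcentered.trans hD2

theorem integral_norm_storm_update_sq_le {U W : Ξ → E} {u w g : E} {a δ σ : ℝ}
    (hUm : AEStronglyMeasurable U μ) (hWm : AEStronglyMeasurable W μ)
    (hUW : ∀ ξ, ‖U ξ - W ξ‖ ≤ δ) (hU : ∫ ξ, U ξ ∂μ = u) (hW : ∫ ξ, W ξ ∂μ = w)
    (hvar : ∫ ξ, ‖U ξ - u‖ ^ 2 ∂μ ≤ σ ^ 2) (ha0 : 0 < a) (ha1 : a ≤ 1)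
    (hint : Integrable (fun ξ => ‖u - (U ξ + (1 - a) • (g - W ξ))‖ ^ 2) μ) :
    ∫ ξ, ‖u - (U ξ + (1 - a) • (g - W ξ))‖ ^ 2 ∂μ
      ≤ (1 - a) ^ 2 * ‖w - g‖ ^ 2 + 2 * (1 - a) ^ 2 * δ ^ 2 + 2 * a ^ 2 * σ ^ 2 := by
  set e := (1 - a) • (w - g)
  set B := fun ξ => (u - U ξ) + (1 - a) • (W ξ - w) with hBdef
  have hsplit : ∀ ξ, u - (U ξ + (1 - a) • (g - W ξ)) = e + B ξ := fun ξ => by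
    simp only [e, hBdef]; module
  simp only [hsplit] at hint ⊢
  have hD : MemLp (fun ξ => U ξ - W ξ) 2 μ := MemLp.of_bound (hUm.sub hWm) δ (ae_of_all _ hUW)
  have hB : MemLp B 2 μ := by
    have heB : MemLp (fun ξ => e + B ξ) 2 μ :=
      (memLp_two_iff_integrable_sq_norm (by fun_prop)).2 hint
    exact (heB.sub (memLp_const e)).ae_eq (ae_of_all _ fun ξ => by simp)
  -- Integrability of `U` is not assumed: it comes from that of the new error, because
  -- `a • (U - u) = -B - (1 - a) • ((U - W) - (u - w))` with `a ≠ 0` and the last term bounded.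
  have hUc : MemLp (fun ξ => U ξ - u) 2 μ := by
    refine ((hB.neg.sub ((hD.sub (memLp_const (u - w))).const_smul (1 - a))).const_smul
      a⁻¹).ae_eq (ae_of_all _ fun ξ => ?_)
    simp only [Pi.smul_apply, Pi.sub_apply, Pi.neg_apply, hBdef]
    rw [inv_smul_eq_iff₀ ha0.ne']
    module
  have hUi : Integrable U μ :=
    ((hUc.integrable one_le_two).add (integrable_const u)).congr (ae_of_all _ fun ξ => by simp)
  have hWi : Integrable W μ :=
    (hUi.sub (hD.integrable one_le_two)).congr (ae_of_all _ fun ξ => by simp)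
  have hB0 : ∫ ξ, B ξ ∂μ = 0 := by
    show ∫ ξ, ((u - U ξ) + (1 - a) • (W ξ - w)) ∂μ = 0
    rw [integral_add (by fun_prop) (by fun_prop), integral_smul,
      integral_sub (integrable_const u) hUi, integral_sub hWi (integrable_const w)]
    simp [hU, hW]
  rw [integral_norm_add_sq_of_integral_eq_zero_s7 e hB hB0, norm_smul, mul_pow, Real.norm_eq_abs,
    sq_abs, add_assoc]
  gcongr
  exact integral_norm_storm_noise_sq_le hUi hWi hUc hUW hU hW hvar ha0.le ha1

theorem integral_norm_storm_step_sq_le {gS : Ξ → E → E} {gf : E → E} {L σ η a : ℝ}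
    (hgSm : ∀ x, AEStronglyMeasurable (fun ξ => gS ξ x) μ)
    (hsmooth : ∀ ξ x y, ‖gS ξ x - gS ξ y‖ ≤ L * ‖x - y‖)
    (hunbiased : ∀ x, ∫ ξ, gS ξ x ∂μ = gf x)
    (hvar : ∀ x, ∫ ξ, ‖gS ξ x - gf x‖ ^ 2 ∂μ ≤ σ ^ 2) (ha0 : 0 < a) (ha1 : a ≤ 1) (x x' g : E)
    (hint : Integrable (fun ξ =>
      ‖gf (x + η • (x' - x)) - (gS ξ (x + η • (x' - x)) + (1 - a) • (g - gS ξ x))‖ ^ 2) μ) :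
    ∫ ξ, ‖gf (x + η • (x' - x)) - (gS ξ (x + η • (x' - x)) + (1 - a) • (g - gS ξ x))‖ ^ 2 ∂μ
      ≤ (1 - a) ^ 2 * ‖gf x - g‖ ^ 2 + 2 * (1 - a) ^ 2 * L ^ 2 * η ^ 2 * ‖x' - x‖ ^ 2
        + 2 * a ^ 2 * σ ^ 2 := by
  have hδ : ∀ ξ, ‖gS ξ (x + η • (x' - x)) - gS ξ x‖ ≤ L * (|η| * ‖x' - x‖) := fun ξ => by
    simpa [norm_smul] using hsmooth ξ (x + η • (x' - x)) x
  refine (integral_norm_storm_update_sq_le (hgSm _) (hgSm _) hδ (hunbiased _) (hunbiased _)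
    (hvar _) ha0 ha1 hint).trans_eq ?_
  rw [mul_pow, mul_pow, sq_abs]
  ring

end SecondMoment

theorem measurable_integral_of_measurable_uncurry {Ξ X E : Type*} [MeasurableSpace Ξ]
    [MeasurableSpace X] {μ : Measure Ξ} [SFinite μ] [NormedAddCommGroup E] [NormedSpace ℝ E]
    [MeasurableSpace E] [BorelSpace E] [SecondCountableTopology E] {G : Ξ → X → E}
    (hG : Measurable (Function.uncurry G)) : Measurable fun x => ∫ ξ, G ξ x ∂μ :=
  ((hG.comp measurable_swap).stronglyMeasurable.integral_prod_right' (ν := μ)).measurable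

theorem ProbabilityTheory.IndepFun.integral_comp_le_of_integral_slice_le
    {Ω S Ξ : Type*} [MeasurableSpace Ω] [MeasurableSpace S] [MeasurableSpace Ξ]
    {P : Measure Ω} [IsFiniteMeasure P] {D : Measure Ξ} {V : Ω → S} {ξ : Ω → Ξ}
    (hV : Measurable V) (hξ : Measurable ξ) (hind : IndepFun V ξ P) (hlaw : P.map ξ = D)
    {F : S × Ξ → ℝ} (hF : Measurable F) (hFi : Integrable (fun ω => F (V ω, ξ ω)) P)
    {G : S → ℝ} (hG : Measurable G) (hGi : Integrable (fun ω => G (V ω)) P)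
    (hslice : ∀ v, Integrable (fun x => F (v, x)) D → ∫ x, F (v, x) ∂D ≤ G v) :
    ∫ ω, F (V ω, ξ ω) ∂P ≤ ∫ ω, G (V ω) ∂P := by
  subst hlaw
  have hVξ : Measurable fun ω => (V ω, ξ ω) := hV.prodMk hξ
  have hjoint : P.map (fun ω => (V ω, ξ ω)) = (P.map V).prod (P.map ξ) :=
    (indepFun_iff_map_prod_eq_prod_map_map hV.aemeasurable hξ.aemeasurable).1 hind
  have hFprod : Integrable F ((P.map V).prod (P.map ξ)) := by
    rw [← hjoint]
    exact (integrable_map_measure hF.aestronglyMeasurable hVξ.aemeasurable).2 hFi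
  have hGmap : Integrable G (P.map V) :=
    (integrable_map_measure hG.aestronglyMeasurable hV.aemeasurable).2 hGi
  calc ∫ ω, F (V ω, ξ ω) ∂P = ∫ z, F z ∂((P.map V).prod (P.map ξ)) := by
        rw [← hjoint, integral_map hVξ.aemeasurable hF.aestronglyMeasurable]
    _ = ∫ v, ∫ x, F (v, x) ∂(P.map ξ) ∂(P.map V) := integral_prod F hFprod
    _ ≤ ∫ v, G v ∂(P.map V) :=
        integral_mono_ae hFprod.integral_prod_left hGmap
          (hFprod.prod_right_ae.mono fun v hv => hslice v hv)
    _ = ∫ ω, G (V ω) ∂P := integral_map hV.aemeasurable hG.aestronglyMeasurable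

theorem integral_norm_storm_error_sq_le_s7 {Ω Ξ E : Type*} [MeasurableSpace Ω] {P : Measure Ω}
    [IsProbabilityMeasure P] [MeasurableSpace Ξ] {D : Measure Ξ} [IsProbabilityMeasure D]
    [NormedAddCommGroup E] [InnerProductSpace ℝ E] [CompleteSpace E] [MeasurableSpace E]
    [BorelSpace E] [SecondCountableTopology E] {gS : Ξ → E → E} {gf : E → E} {L σ η a : ℝ}
    (hsmooth : ∀ ξ x y, ‖gS ξ x - gS ξ y‖ ≤ L * ‖x - y‖)
    (hunbiased : ∀ x, ∫ ξ, gS ξ x ∂D = gf x)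
    (hvar : ∀ x, ∫ ξ, ‖gS ξ x - gf x‖ ^ 2 ∂D ≤ σ ^ 2)
    (hgSmeas : Measurable (Function.uncurry gS)) (ha0 : 0 < a) (ha1 : a ≤ 1)
    {xt xtil gt xt1 gt1 : Ω → E} {ξ1 : Ω → Ξ} (hxt : Measurable xt) (hxtil : Measurable xtil)
    (hgt : Measurable gt) (hξ1 : Measurable ξ1) (hx1 : ∀ ω, xt1 ω = xt ω + η • (xtil ω - xt ω))
    (hlaw : P.map ξ1 = D) (hindep : IndepFun (fun ω => (xt ω, xtil ω, gt ω)) ξ1 P)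
    (hg1 : ∀ ω, gt1 ω = gS (ξ1 ω) (xt1 ω) + (1 - a) • (gt ω - gS (ξ1 ω) (xt ω)))
    (hI0 : Integrable (fun ω => ‖gf (xt ω) - gt ω‖ ^ 2) P)
    (hI1 : Integrable (fun ω => ‖gf (xt1 ω) - gt1 ω‖ ^ 2) P)
    (hIX : Integrable (fun ω => ‖xtil ω - xt ω‖ ^ 2) P) :
    ∫ ω, ‖gf (xt1 ω) - gt1 ω‖ ^ 2 ∂P
      ≤ (1 - a) ^ 2 * ∫ ω, ‖gf (xt ω) - gt ω‖ ^ 2 ∂P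
        + 2 * (1 - a) ^ 2 * L ^ 2 * η ^ 2 * ∫ ω, ‖xtil ω - xt ω‖ ^ 2 ∂P
        + 2 * a ^ 2 * σ ^ 2 := by
  have hgf : Measurable gf := by
    simpa only [hunbiased] using measurable_integral_of_measurable_uncurry hgSmeas (μ := D)
  let step : E × E × E → E := fun v => v.1 + η • (v.2.1 - v.1)
  let F : (E × E × E) × Ξ → ℝ := fun z =>
    ‖gf (step z.1) - (gS z.2 (step z.1) + (1 - a) • (z.1.2.2 - gS z.2 z.1.1))‖ ^ 2
  let bound : E × E × E → ℝ := fun v =>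
    (1 - a) ^ 2 * ‖gf v.1 - v.2.2‖ ^ 2 + 2 * (1 - a) ^ 2 * L ^ 2 * η ^ 2 * ‖v.2.1 - v.1‖ ^ 2
      + 2 * a ^ 2 * σ ^ 2
  have hF : Measurable F := by
    have hstep : Measurable step := by fun_prop
    have h1 : Measurable fun z : (E × E × E) × Ξ => gS z.2 (step z.1) :=
      hgSmeas.comp (measurable_snd.prodMk (hstep.comp measurable_fst))
    have h2 : Measurable fun z : (E × E × E) × Ξ => gS z.2 z.1.1 :=
      hgSmeas.comp (measurable_snd.prodMk measurable_fst.fst)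
    fun_prop
  have hF_eq : ∀ ω, F ((xt ω, xtil ω, gt ω), ξ1 ω) = ‖gf (xt1 ω) - gt1 ω‖ ^ 2 := fun ω => by
    simp only [F, step, hg1, hx1]
  have hbound_eq : ∫ ω, bound (xt ω, xtil ω, gt ω) ∂P
      = (1 - a) ^ 2 * ∫ ω, ‖gf (xt ω) - gt ω‖ ^ 2 ∂P
        + 2 * (1 - a) ^ 2 * L ^ 2 * η ^ 2 * ∫ ω, ‖xtil ω - xt ω‖ ^ 2 ∂P
        + 2 * a ^ 2 * σ ^ 2 := by
    rw [integral_add ((hI0.const_mul _).fun_add (hIX.const_mul _)) (integrable_const _),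
      integral_add (hI0.const_mul _) (hIX.const_mul _), integral_const_mul, integral_const_mul,
      integral_const]
    simp
  have hslice : ∀ v, Integrable (fun x => F (v, x)) D → ∫ x, F (v, x) ∂D ≤ bound v :=
    fun v => integral_norm_storm_step_sq_le
      (fun x => (hgSmeas.comp (measurable_id.prodMk measurable_const)).aestronglyMeasurable)
      hsmooth hunbiased hvar ha0 ha1 v.1 v.2.1 v.2.2
  calc ∫ ω, ‖gf (xt1 ω) - gt1 ω‖ ^ 2 ∂P = ∫ ω, F ((xt ω, xtil ω, gt ω), ξ1 ω) ∂P := by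
        simp only [hF_eq]
    _ ≤ ∫ ω, bound (xt ω, xtil ω, gt ω) ∂P :=
        hindep.integral_comp_le_of_integral_slice_le (hxt.prodMk (hxtil.prodMk hgt)) hξ1 hlaw
          hF (by simpa only [hF_eq] using hI1) (by fun_prop)
          (((hI0.const_mul _).fun_add (hIX.const_mul _)).fun_add (integrable_const _)) hslice
    _ = _ := hbound_eq

theorem sub_le_one_div_mul_of_pow_three_sub_le {u v : ℝ} (hv : 0 < v) (hvu : v ≤ u)
    (h : u ^ 3 - v ^ 3 ≤ 1) : u - v ≤ 1 / (u * v) := by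
  rw [le_div_iff₀ (by nlinarith)]
  nlinarith [mul_nonneg (sub_nonneg.2 hvu) (sq_nonneg u),
    mul_nonneg (sub_nonneg.2 hvu) (sq_nonneg v)]

theorem rpow_one_third_add_one_sub_le {b : ℝ} (hb : 0 < b) :
    (b + 1) ^ (1 / 3 : ℝ) - b ^ (1 / 3 : ℝ)
      ≤ 1 / ((b + 1) ^ (1 / 3 : ℝ) * b ^ (1 / 3 : ℝ)) := by
  have hcube : ∀ x : ℝ, 0 ≤ x → (x ^ (1 / 3 : ℝ)) ^ 3 = x := fun x hx => by
    rw [← Real.rpow_natCast, ← Real.rpow_mul hx]; norm_num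
  refine sub_le_one_div_mul_of_pow_three_sub_le (by positivity)
    (Real.rpow_le_rpow hb.le (by linarith) (by norm_num)) ?_
  rw [hcube _ (by linarith), hcube _ hb.le]
  linarith

theorem one_sub_sq_mul_one_div_le {k c K u w : ℝ} (hk : 0 < k) (hkw : k ≤ w) (hwu : w ≤ u)
    (hgap : u - w ≤ 1 / (u * w)) (hc : 1 / k ^ 3 + K ≤ c) (ha0 : 0 ≤ c * (k / u) ^ 2)
    (ha1 : c * (k / u) ^ 2 ≤ 1) :
    (1 - c * (k / u) ^ 2) ^ 2 * (1 / (k / u)) ≤ 1 / (k / w) - K * (k / u) := by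
  have hu : 0 < u := hk.trans_le (hkw.trans hwu)
  have hgap' : (u - w) / k ≤ 1 / k ^ 3 * (k / u) :=
    calc (u - w) / k ≤ 1 / (u * k) / k := by
          gcongr; exact hgap.trans (one_div_le_one_div_of_le (by positivity) (by gcongr))
      _ = 1 / k ^ 3 * (k / u) := by field_simp
  rw [one_div_div, one_div_div]
  calc (1 - c * (k / u) ^ 2) ^ 2 * (u / k) ≤ (1 - c * (k / u) ^ 2) * (u / k) := by
        gcongr; nlinarith
    _ = u / k - c * (k / u) := by field_simp
    _ ≤ w / k - K * (k / u) := by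
        have : 1 / k ^ 3 * (k / u) ≤ (c - K) * (k / u) := by gcongr; linarith
        rw [sub_div] at hgap'
        linarith

theorem one_sub_sq_mul_one_div_stepSize_le {k m c K : ℝ} (hk : 0 < k) (hkm : k ^ 3 ≤ m)
    (hc : 1 / k ^ 3 + K ≤ c) {μ : ℕ → ℝ} (hμ : ∀ t : ℕ, μ t = k / (m + t) ^ ((1 : ℝ) / 3))
    {t : ℕ} (ht : 1 ≤ t) (ha0 : 0 ≤ c * μ t ^ 2) (ha1 : c * μ t ^ 2 ≤ 1) :
    (1 - c * μ t ^ 2) ^ 2 * (1 / μ t) ≤ 1 / μ (t - 1) - K * μ t := by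
  obtain ⟨s, rfl⟩ := Nat.exists_eq_add_of_le' ht
  have hb : 0 < m + s := by linarith [pow_pos hk 3, (Nat.cast_nonneg s : (0 : ℝ) ≤ s)]
  have hkb : k ≤ (m + s) ^ (1 / 3 : ℝ) := by
    calc k = (k ^ 3) ^ (1 / 3 : ℝ) := by
          rw [← Real.rpow_natCast, ← Real.rpow_mul hk.le]; norm_num
      _ ≤ (m + s) ^ (1 / 3 : ℝ) := by gcongr; linarith
  have hshift : m + ((s + 1 : ℕ) : ℝ) = m + s + 1 := by push_cast; ring
  rw [hμ, hshift] at ha0 ha1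
  rw [Nat.add_sub_cancel, hμ, hμ, hshift]
  exact one_sub_sq_mul_one_div_le hk hkb (Real.rpow_le_rpow hb.le (by linarith) (by norm_num))
    (rpow_one_third_add_one_sub_le hb) hc ha0 ha1

theorem statement7_general {d : ℕ} {Ω : Type*} [MeasurableSpace Ω] (P : Measure Ω)
    [IsProbabilityMeasure P] {Ξ : Type*} [MeasurableSpace Ξ] (D : Measure Ξ)
    [IsProbabilityMeasure D]
    (gS : Ξ → EuclideanSpace ℝ (Fin d) → EuclideanSpace ℝ (Fin d))
    (gf : EuclideanSpace ℝ (Fin d) → EuclideanSpace ℝ (Fin d))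
    (L σ k m ρ γ c : ℝ)
    (hsmooth : ∀ ξ (x y : EuclideanSpace ℝ (Fin d)), ‖gS ξ x - gS ξ y‖ ≤ L * ‖x - y‖)
    (hunbiased : ∀ x, ∫ ξ, gS ξ x ∂D = gf x)
    (hvar : ∀ x, ∫ ξ, ‖gS ξ x - gf x‖ ^ 2 ∂D ≤ σ ^ 2)
    (hgSmeas : Measurable (Function.uncurry gS))
    (hk : 0 < k) (hm : max (3 / 2) (k ^ 3) ≤ m)
    (hc : 1 / k ^ 3 + 10 * L ^ 2 * γ ^ 2 / ρ ^ 2 ≤ c)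
    (μ : ℕ → ℝ) (hμ : ∀ t : ℕ, μ t = k / (m + t) ^ ((1 : ℝ) / 3))
    (α : ℕ → ℝ) (hα : ∀ t : ℕ, α (t + 1) = c * μ t ^ 2)
    (hα01 : ∀ t : ℕ, 0 < α (t + 1) ∧ α (t + 1) ≤ 1) :
    ∀ t : ℕ, 1 ≤ t →
    ∀ (xt xtil gt : Ω → EuclideanSpace ℝ (Fin d)) (ξ1 : Ω → Ξ)
      (xt1 gt1 : Ω → EuclideanSpace ℝ (Fin d)),
      Measurable xt → Measurable xtil → Measurable gt → Measurable ξ1 →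
      (∀ ω, xt1 ω = xt ω + μ t • (xtil ω - xt ω)) →
      Measure.map ξ1 P = D →
      IndepFun (fun ω => (xt ω, xtil ω, gt ω)) ξ1 P →
      (∀ ω, gt1 ω = gS (ξ1 ω) (xt1 ω) + (1 - α (t + 1)) • (gt ω - gS (ξ1 ω) (xt ω))) →
      Integrable (fun ω => ‖gf (xt ω) - gt ω‖ ^ 2) P →
      Integrable (fun ω => ‖gf (xt1 ω) - gt1 ω‖ ^ 2) P →
      Integrable (fun ω => ‖xtil ω - xt ω‖ ^ 2) P →
      (1 / μ t) * ∫ ω, ‖gf (xt1 ω) - gt1 ω‖ ^ 2 ∂P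
          - (1 / μ (t - 1)) * ∫ ω, ‖gf (xt ω) - gt ω‖ ^ 2 ∂P
        ≤ -(10 * L ^ 2 * γ ^ 2 / ρ ^ 2) * μ t * ∫ ω, ‖gf (xt ω) - gt ω‖ ^ 2 ∂P
          + 2 * L ^ 2 * μ t * ∫ ω, ‖xtil ω - xt ω‖ ^ 2 ∂P
          + 2 * c ^ 2 * μ t ^ 3 * σ ^ 2 := by
  intro t ht xt xtil gt ξ1 xt1 gt1 hxt hxtil hgt hξ1 hx1 hlaw hindep hg1 hI0 hI1 hIX
  obtain ⟨ha0, ha1⟩ := hα01 t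
  rw [hα t] at ha0 ha1 hg1
  have hkm : k ^ 3 ≤ m := (le_max_right _ _).trans hm
  have hμpos : 0 < μ t := by
    have : 0 < m + t := by linarith [pow_pos hk 3, (Nat.cast_nonneg t : (0 : ℝ) ≤ t)]
    rw [hμ t]; positivity
  have hstep := integral_norm_storm_error_sq_le_s7 hsmooth hunbiased hvar hgSmeas ha0 ha1 hxt hxtil
    hgt hξ1 hx1 hlaw hindep hg1 hI0 hI1 hIX
  have hdecay := one_sub_sq_mul_one_div_stepSize_le hk hkm hc hμ ht ha0.le ha1
  set a := c * μ t ^ 2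
  set I0 := ∫ ω, ‖gf (xt ω) - gt ω‖ ^ 2 ∂P
  set IX := ∫ ω, ‖xtil ω - xt ω‖ ^ 2 ∂P
  have hI0nn : 0 ≤ I0 := integral_nonneg fun _ => sq_nonneg _
  have hIXnn : 0 ≤ IX := integral_nonneg fun _ => sq_nonneg _
  have hshrink : (1 - a) ^ 2 ≤ 1 := by nlinarith
  calc (1 / μ t) * ∫ ω, ‖gf (xt1 ω) - gt1 ω‖ ^ 2 ∂P - (1 / μ (t - 1)) * I0
      ≤ (1 / μ t) * ((1 - a) ^ 2 * I0 + 2 * (1 - a) ^ 2 * L ^ 2 * μ t ^ 2 * IX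
          + 2 * a ^ 2 * σ ^ 2) - (1 / μ (t - 1)) * I0 := by gcongr
    _ = ((1 - a) ^ 2 * (1 / μ t) - 1 / μ (t - 1)) * I0 + (1 - a) ^ 2 * (2 * L ^ 2 * μ t * IX)
        + 2 * c ^ 2 * μ t ^ 3 * σ ^ 2 := by field_simp; ring
    _ ≤ (1 / μ (t - 1) - 10 * L ^ 2 * γ ^ 2 / ρ ^ 2 * μ t - 1 / μ (t - 1)) * I0
        + 1 * (2 * L ^ 2 * μ t * IX) + 2 * c ^ 2 * μ t ^ 3 * σ ^ 2 := by gcongr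
    _ = _ := by ring

/-- one-step Lyapunov inequality for the STORM estimator in SUPER-ADAM,
`τ = 1`: with `f(x) = E_ξ[f(x;ξ)]`, each `f(·;ξ)` differentiable and `L`-smooth,
unbiased stochastic gradients with variance `≤ σ²`, `k > 0`, `m ≥ max(3/2, k³)`,
`ρ, γ > 0`, `c ≥ 1/k³ + 10L²γ²/ρ²`, `μ_t = k/(m+t)^{1/3}`, `α_{t+1} = c μ_t² ∈ (0,1]`,
`x_{t+1} = x_t + μ_t(x̃_{t+1} − x_t)`, `ξ_{t+1} ∼ D` independent of `(x_t, x̃_{t+1}, g_t)`,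
`g_{t+1} = ∇f(x_{t+1};ξ_{t+1}) + (1 − α_{t+1})(g_t − ∇f(x_t;ξ_{t+1}))`: for every `t ≥ 1`,
`(1/μ_t) E‖∇f(x_{t+1}) − g_{t+1}‖² − (1/μ_{t−1}) E‖∇f(x_t) − g_t‖²
  ≤ −(10L²γ²/ρ²) μ_t E‖∇f(x_t) − g_t‖² + 2L² μ_t E‖x̃_{t+1} − x_t‖² + 2c² μ_t³ σ²`. -/
theorem statement7 {d : ℕ} {Ω : Type*} [MeasurableSpace Ω] (P : Measure Ω)
    [IsProbabilityMeasure P] {Ξ : Type*} [MeasurableSpace Ξ] (D : Measure Ξ)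
    [IsProbabilityMeasure D]
    (fS : Ξ → EuclideanSpace ℝ (Fin d) → ℝ)
    (gS : Ξ → EuclideanSpace ℝ (Fin d) → EuclideanSpace ℝ (Fin d))
    (f : EuclideanSpace ℝ (Fin d) → ℝ)
    (gf : EuclideanSpace ℝ (Fin d) → EuclideanSpace ℝ (Fin d))
    (L σ k m ρ γ c : ℝ) (hL : 0 < L) (hσ : 0 ≤ σ)
    (hf : ∀ x, f x = ∫ ξ, fS ξ x ∂D)
    (hgS : ∀ ξ x, HasGradientAt (fS ξ) (gS ξ x) x)
    (hgf : ∀ x, HasGradientAt f (gf x) x)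
    (hsmooth : ∀ ξ (x y : EuclideanSpace ℝ (Fin d)), ‖gS ξ x - gS ξ y‖ ≤ L * ‖x - y‖)
    (hunbiased : ∀ x, ∫ ξ, gS ξ x ∂D = gf x)
    (hvar : ∀ x, ∫ ξ, ‖gS ξ x - gf x‖ ^ 2 ∂D ≤ σ ^ 2)
    (hgSmeas : Measurable (Function.uncurry gS))
    (hk : 0 < k) (hm : max (3 / 2) (k ^ 3) ≤ m) (hρ : 0 < ρ) (hγ : 0 < γ)
    (hc : 1 / k ^ 3 + 10 * L ^ 2 * γ ^ 2 / ρ ^ 2 ≤ c)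
    (μ : ℕ → ℝ) (hμ : ∀ t : ℕ, μ t = k / (m + t) ^ ((1 : ℝ) / 3))
    (α : ℕ → ℝ) (hα : ∀ t : ℕ, α (t + 1) = c * μ t ^ 2)
    (hα01 : ∀ t : ℕ, 0 < α (t + 1) ∧ α (t + 1) ≤ 1) :
    ∀ t : ℕ, 1 ≤ t →
    ∀ (xt xtil gt : Ω → EuclideanSpace ℝ (Fin d)) (ξ1 : Ω → Ξ)
      (xt1 gt1 : Ω → EuclideanSpace ℝ (Fin d)),
      Measurable xt → Measurable xtil → Measurable gt → Measurable ξ1 →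
      (∀ ω, xt1 ω = xt ω + μ t • (xtil ω - xt ω)) →
      Measure.map ξ1 P = D →
      IndepFun (fun ω => (xt ω, xtil ω, gt ω)) ξ1 P →
      (∀ ω, gt1 ω = gS (ξ1 ω) (xt1 ω) + (1 - α (t + 1)) • (gt ω - gS (ξ1 ω) (xt ω))) →
      Integrable (fun ω => ‖gf (xt ω) - gt ω‖ ^ 2) P →
      Integrable (fun ω => ‖gf (xt1 ω) - gt1 ω‖ ^ 2) P →
      Integrable (fun ω => ‖xtil ω - xt ω‖ ^ 2) P →
      (1 / μ t) * ∫ ω, ‖gf (xt1 ω) - gt1 ω‖ ^ 2 ∂P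
          - (1 / μ (t - 1)) * ∫ ω, ‖gf (xt ω) - gt ω‖ ^ 2 ∂P
        ≤ -(10 * L ^ 2 * γ ^ 2 / ρ ^ 2) * μ t * ∫ ω, ‖gf (xt ω) - gt ω‖ ^ 2 ∂P
          + 2 * L ^ 2 * μ t * ∫ ω, ‖xtil ω - xt ω‖ ^ 2 ∂P
          + 2 * c ^ 2 * μ t ^ 3 * σ ^ 2 :=
  statement7_general P D gS gf L σ k m ρ γ c hsmooth hunbiased hvar hgSmeas hk hm hc μ hμ α hα hα01
end

section
/- Under the hypotheses: f(x) = E_{ξ∼D}[f(x;ξ)] differentiable and L-smooth, unbiased stochastic gradients with variance ≤ σ², constants k > 0, m ≥ k², ρ > 0, γ > 0, 8 L γ/ρ ≤ c ≤ m^{1/2}/k, μ_t = k/(m+t)^{1/2}, α_{t+1} = c μ_t; random vectors x_t, x̃_{t+1}, g_t with x_{t+1} = x_t + μ_t (x̃_{t+1} − x_t), ξ_{t+1} ∼ D independent of (x_t, x̃_{t+1}, g_t), and g_{t+1} = (1 − α_{t+1}) g_t + α_{t+1} ∇f(x_{t+1}; ξ_{t+1}): for every t ≥ 1, E‖∇f(x_{t+1})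 − g_{t+1}‖² − E‖∇f(x_t) − g_t‖² ≤ −(8 L γ μ_t/ρ) E‖∇f(x_t) − g_t‖² + (L ρ μ_t/(8 γ)) E‖x̃_{t+1} − x_t‖² + (m/k²) μ_t² σ². -/
/-!
Write `e_t = ∇f(x_t) - g_t` and `α = α_{t+1}`. The new error splits as
`e_{t+1} = (1 - α) (∇f(x_{t+1}) - g_t) + α (∇f(x_{t+1}) - ∇f(x_{t+1}; ξ_{t+1}))`.
Because `ξ_{t+1}` is independent of `(x_{t+1}, g_t)` and the stochastic gradient is unbiased,
the two summands are orthogonal in `L²`, and the second one has second moment at most `σ²`.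
Young's inequality with weights `1/(1 - α)` and `1/α`, together with `L`-smoothness, bounds the
first one by `‖e_t‖² / (1 - α) + L² μ_t² ‖x̃_{t+1} - x_t‖² / α`. Hence
`E‖e_{t+1}‖² ≤ (1 - α) E‖e_t‖² + (L² μ_t² / α) E‖x̃_{t+1} - x_t‖² + α² σ²`, and the constraints
`8Lγ/ρ ≤ c ≤ √m / k` turn these coefficients into the claimed ones.
-/

open scoped RealInnerProductSpace
open MeasureTheory ProbabilityTheory

theorem norm_add_sq_le_inv_one_sub_mul_add_inv_mul {E : Type*} [SeminormedAddCommGroup E]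
    (u v : E) {a : ℝ} (ha₀ : 0 < a) (ha₁ : a < 1) :
    ‖u + v‖ ^ 2 ≤ (1 - a)⁻¹ * ‖u‖ ^ 2 + a⁻¹ * ‖v‖ ^ 2 := by
  have h₁ : 0 < 1 - a := sub_pos.2 ha₁
  have hsq : (‖u‖ + ‖v‖) ^ 2 ≤ (1 - a)⁻¹ * ‖u‖ ^ 2 + a⁻¹ * ‖v‖ ^ 2 := by
    rw [← div_eq_inv_mul, ← div_eq_inv_mul, div_add_div _ _ h₁.ne' ha₀.ne',
      le_div_iff₀ (by positivity)]
    nlinarith [sq_nonneg (a * ‖u‖ - (1 - a) * ‖v‖)]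
  exact (pow_le_pow_left₀ (norm_nonneg _) (norm_add_le u v) 2).trans hsq

theorem MeasureTheory.MemLp.integrable_inner {α E : Type*} [MeasurableSpace α] {μ : Measure α}
    [NormedAddCommGroup E] [InnerProductSpace ℝ E] {U V : α → E}
    (hU : MemLp U 2 μ) (hV : MemLp V 2 μ) : Integrable (fun ω => ⟪U ω, V ω⟫) μ := by
  refine (L2.integrable_inner (𝕜 := ℝ) (hU.toLp U) (hV.toLp V)).congr ?_
  filter_upwards [hU.coeFn_toLp, hV.coeFn_toLp] with ω hUω hVω
  rw [hUω, hVω]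

theorem integral_norm_sq_smul_add_smul_of_integral_inner_eq_zero {α E : Type*}
    [MeasurableSpace α] {μ : Measure α} [NormedAddCommGroup E] [InnerProductSpace ℝ E] {U V : α → E}
    (hU : MemLp U 2 μ) (hV : MemLp V 2 μ) (horth : ∫ ω, ⟪U ω, V ω⟫ ∂μ = 0) (u v : ℝ) :
    ∫ ω, ‖u • U ω + v • V ω‖ ^ 2 ∂μ = u ^ 2 * ∫ ω, ‖U ω‖ ^ 2 ∂μ + v ^ 2 * ∫ ω, ‖V ω‖ ^ 2 ∂μ := by
  have hexpand : ∀ ω, ‖u • U ω + v • V ω‖ ^ 2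
      = u ^ 2 * ‖U ω‖ ^ 2 + (2 * u * v * ⟪U ω, V ω⟫ + v ^ 2 * ‖V ω‖ ^ 2) := by
    intro ω
    rw [norm_add_sq_real, norm_smul, norm_smul, real_inner_smul_left, real_inner_smul_right,
      mul_pow, mul_pow, Real.norm_eq_abs, Real.norm_eq_abs, sq_abs, sq_abs]
    ring
  have hU2 := (hU.integrable_norm_pow two_ne_zero).const_mul (u ^ 2)
  have hV2 := (hV.integrable_norm_pow two_ne_zero).const_mul (v ^ 2)
  have hUV := (hU.integrable_inner hV).const_mul (2 * u * v)
  simp_rw [hexpand]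
  rw [integral_add hU2 (hUV.fun_add hV2), integral_add hUV hV2, integral_const_mul,
    integral_const_mul, integral_const_mul, horth]
  ring

theorem norm_apply_add_smul_sub_sq_le {E F : Type*} [SeminormedAddCommGroup E] [NormedSpace ℝ E]
    [SeminormedAddCommGroup F] {f : E → F} {L a ν : ℝ}
    (hf : ∀ x y, ‖f x - f y‖ ≤ L * ‖x - y‖) (ha₀ : 0 < a) (ha₁ : a < 1) (x v : E) (g : F) :
    ‖f (x + ν • v) - g‖ ^ 2 ≤ (1 - a)⁻¹ * ‖f x - g‖ ^ 2 + a⁻¹ * (L * ν) ^ 2 * ‖v‖ ^ 2 := by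
  have hstep : ‖f (x + ν • v) - f x‖ ^ 2 ≤ (L * ν) ^ 2 * ‖v‖ ^ 2 := by
    calc _ ≤ (L * ‖ν • v‖) ^ 2 := by
          gcongr
          exact (hf _ _).trans_eq (by rw [add_sub_cancel_left])
      _ = (L * ν) ^ 2 * ‖v‖ ^ 2 := by
          rw [norm_smul, Real.norm_eq_abs, mul_pow, mul_pow, mul_pow, sq_abs, mul_assoc]
  calc _ = ‖(f x - g) + (f (x + ν • v) - f x)‖ ^ 2 := by
        rw [add_comm (f x - g), sub_add_sub_cancel]
    _ ≤ (1 - a)⁻¹ * ‖f x - g‖ ^ 2 + a⁻¹ * ‖f (x + ν • v) - f x‖ ^ 2 :=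
      norm_add_sq_le_inv_one_sub_mul_add_inv_mul _ _ ha₀ ha₁
    _ ≤ _ := by
        rw [mul_assoc a⁻¹]
        gcongr

namespace ProbabilityTheory

variable {Ω β Ξ : Type*} [MeasurableSpace Ω] [MeasurableSpace β] [MeasurableSpace Ξ]
  {P : Measure Ω} [IsProbabilityMeasure P] {D : Measure Ξ} {Y : Ω → β} {ξ : Ω → Ξ}

theorem IndepFun.integral_comp_eq_integral_integral {F : Type*} [NormedAddCommGroup F]
    [NormedSpace ℝ F] [CompleteSpace F] (hind : IndepFun Y ξ P) (hY : Measurable Y)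
    (hξ : Measurable ξ) (hD : P.map ξ = D) {G : β → Ξ → F}
    (hG : StronglyMeasurable (Function.uncurry G)) (hint : Integrable (fun ω => G (Y ω) (ξ ω)) P) :
    Integrable (Function.uncurry G) ((P.map Y).prod D) ∧
      ∫ ω, G (Y ω) (ξ ω) ∂P = ∫ y, ∫ s, G y s ∂D ∂(P.map Y) := by
  subst hD
  have hmap : P.map (fun ω => (Y ω, ξ ω)) = (P.map Y).prod (P.map ξ) :=
    (indepFun_iff_map_prod_eq_prod_map_map hY.aemeasurable hξ.aemeasurable).1 hind
  have hYξ : AEMeasurable (fun ω => (Y ω, ξ ω)) P := (hY.prodMk hξ).aemeasurable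
  have hGint : Integrable (Function.uncurry G) ((P.map Y).prod (P.map ξ)) := by
    rwa [← hmap, integrable_map_measure hG.aestronglyMeasurable hYξ]
  refine ⟨hGint, ?_⟩
  calc ∫ ω, G (Y ω) (ξ ω) ∂P = ∫ p, Function.uncurry G p ∂(P.map fun ω => (Y ω, ξ ω)) :=
        (integral_map hYξ hG.aestronglyMeasurable).symm
    _ = _ := by rw [hmap, integral_prod _ hGint]; rfl

theorem IndepFun.integral_norm_sq_le {E : Type*} [NormedAddCommGroup E]
    (hind : IndepFun Y ξ P) (hY : Measurable Y) (hξ : Measurable ξ) (hD : P.map ξ = D)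
    {N : β → Ξ → E} (hN : StronglyMeasurable (Function.uncurry N)) {C : ℝ}
    (hvar : ∀ y, ∫ s, ‖N y s‖ ^ 2 ∂D ≤ C) (hNY : MemLp (fun ω => N (Y ω) (ξ ω)) 2 P) :
    ∫ ω, ‖N (Y ω) (ξ ω)‖ ^ 2 ∂P ≤ C := by
  have := Measure.isProbabilityMeasure_map (μ := P) hY.aemeasurable
  rw [(hind.integral_comp_eq_integral_integral (G := fun y s => ‖N y s‖ ^ 2) hY hξ hD
    (by exact hN.norm.pow 2) (hNY.integrable_norm_pow two_ne_zero)).2]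
  calc ∫ y, ∫ s, ‖N y s‖ ^ 2 ∂D ∂(P.map Y) ≤ ∫ _, C ∂(P.map Y) :=
        integral_mono_of_nonneg (.of_forall fun y => integral_nonneg fun s => by positivity)
          (integrable_const C) (.of_forall hvar)
    _ = C := by simp

theorem IndepFun.integral_inner_eq_zero {E : Type*} [NormedAddCommGroup E] [InnerProductSpace ℝ E]
    [CompleteSpace E] (hind : IndepFun Y ξ P) (hY : Measurable Y)
    (hξ : Measurable ξ) (hD : P.map ξ = D) {A : β → E} {N : β → Ξ → E} (hA : StronglyMeasurable A)
    (hN : StronglyMeasurable (Function.uncurry N)) (hmean : ∀ y, ∫ s, N y s ∂D = 0)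
    (hAY : MemLp (fun ω => A (Y ω)) 2 P) (hNY : MemLp (fun ω => N (Y ω) (ξ ω)) 2 P) :
    ∫ ω, ⟪A (Y ω), N (Y ω) (ξ ω)⟫ ∂P = 0 := by
  subst hD
  have hNint := (hind.integral_comp_eq_integral_integral hY hξ rfl
    hN (hNY.integrable one_le_two)).1
  rw [(hind.integral_comp_eq_integral_integral (G := fun y s => ⟪A y, N y s⟫) hY hξ rfl
    ((hA.comp_measurable measurable_fst).inner hN) (hAY.integrable_inner hNY)).2]
  refine integral_eq_zero_of_ae ?_
  filter_upwards [hNint.prod_right_ae] with y hy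
  rw [Pi.zero_apply, integral_inner (by exact hy), hmean, inner_zero_right]

end ProbabilityTheory

section Momentum

variable {Ω Ξ E : Type*} [MeasurableSpace Ω] [MeasurableSpace Ξ] {P : Measure Ω}
  [IsProbabilityMeasure P] {D : Measure Ξ} [IsProbabilityMeasure D]
  [NormedAddCommGroup E] [InnerProductSpace ℝ E] [CompleteSpace E] [MeasurableSpace E]
  [BorelSpace E] [SecondCountableTopology E] {gf : E → E} {gS : Ξ → E → E} {σ : ℝ}

theorem integral_norm_sq_grad_sub_momentum_le (hgf : Continuous gf)
    (hgS : Measurable (Function.uncurry gS)) (hunbiased : ∀ x, ∫ s, gS s x ∂D = gf x)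
    (hvar : ∀ x, ∫ s, ‖gS s x - gf x‖ ^ 2 ∂D ≤ σ ^ 2) {y g : Ω → E} {ξ : Ω → Ξ}
    (hy : Measurable y) (hg : Measurable g) (hξ : Measurable ξ) (hD : P.map ξ = D)
    (hind : IndepFun (fun ω => (y ω, g ω)) ξ P) {a : ℝ} (ha : a ≠ 0)
    (hA : Integrable (fun ω => ‖gf (y ω) - g ω‖ ^ 2) P)
    (hB : Integrable (fun ω => ‖gf (y ω) - ((1 - a) • g ω + a • gS (ξ ω) (y ω))‖ ^ 2) P) :
    ∫ ω, ‖gf (y ω) - ((1 - a) • g ω + a • gS (ξ ω) (y ω))‖ ^ 2 ∂P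
      ≤ (1 - a) ^ 2 * ∫ ω, ‖gf (y ω) - g ω‖ ^ 2 ∂P + a ^ 2 * σ ^ 2 := by
  set A : E × E → E := fun p => gf p.1 - p.2
  set N : E × E → Ξ → E := fun p s => gf p.1 - gS s p.1
  have hY : Measurable fun ω => (y ω, g ω) := hy.prodMk hg
  have hAm : StronglyMeasurable A :=
    ((hgf.comp continuous_fst).sub continuous_snd).stronglyMeasurable
  have hNm : StronglyMeasurable (Function.uncurry N) :=
    ((hgf.measurable.comp measurable_fst.fst).sub
      (hgS.comp (measurable_snd.prodMk measurable_fst.fst))).stronglyMeasurable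
  have hNYm : StronglyMeasurable fun ω => N (y ω, g ω) (ξ ω) :=
    hNm.comp_measurable (hY.prodMk hξ)
  have hdecomp : ∀ ω, gf (y ω) - ((1 - a) • g ω + a • gS (ξ ω) (y ω))
      = (1 - a) • A (y ω, g ω) + a • N (y ω, g ω) (ξ ω) := fun ω => by simp only [A, N]; module
  have hAY : MemLp (fun ω => A (y ω, g ω)) 2 P :=
    (memLp_two_iff_integrable_sq_norm (hAm.comp_measurable hY).aestronglyMeasurable).2 hA
  have hNY : MemLp (fun ω => N (y ω, g ω) (ξ ω)) 2 P := by
    have hBY : MemLp (fun ω => (1 - a) • A (y ω, g ω) + a • N (y ω, g ω) (ξ ω)) 2 P := by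
      refine (memLp_two_iff_integrable_sq_norm ?_).2 (by simpa only [hdecomp] using hB)
      exact (((hAm.comp_measurable hY).const_smul _).add (hNYm.const_smul _)).aestronglyMeasurable
    refine ((hBY.sub (hAY.const_smul (1 - a))).const_smul a⁻¹).ae_eq (.of_forall fun ω => ?_)
    simp only [Pi.smul_apply, Pi.sub_apply]
    rw [add_sub_cancel_left, smul_smul, inv_mul_cancel₀ ha, one_smul]
  have hmean : ∀ p, ∫ s, N p s ∂D = 0 := by
    intro p
    by_cases hint : Integrable (fun s => gS s p.1) D
    · simp only [N]
      rw [integral_sub (integrable_const _) hint, integral_const, hunbiased]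
      simp
    · -- otherwise `N p` is not integrable either, and its Bochner integral is `0` by convention
      refine integral_undef fun h => hint ?_
      exact ((integrable_const (gf p.1)).sub h).congr (.of_forall fun s => by simp [N])
  have hvarN : ∀ p, ∫ s, ‖N p s‖ ^ 2 ∂D ≤ σ ^ 2 := fun p => by
    simpa only [N, norm_sub_rev] using hvar p.1
  calc ∫ ω, ‖gf (y ω) - ((1 - a) • g ω + a • gS (ξ ω) (y ω))‖ ^ 2 ∂P
      = (1 - a) ^ 2 * ∫ ω, ‖A (y ω, g ω)‖ ^ 2 ∂P
          + a ^ 2 * ∫ ω, ‖N (y ω, g ω) (ξ ω)‖ ^ 2 ∂P := by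
        simp_rw [hdecomp]
        exact integral_norm_sq_smul_add_smul_of_integral_inner_eq_zero hAY hNY
          (hind.integral_inner_eq_zero hY hξ hD hAm hNm hmean hAY hNY) _ _
    _ ≤ (1 - a) ^ 2 * ∫ ω, ‖gf (y ω) - g ω‖ ^ 2 ∂P + a ^ 2 * σ ^ 2 := by
        gcongr
        exact hind.integral_norm_sq_le hY hξ hD hNm hvarN hNY

theorem integral_norm_sq_momentum_error_step_le {L : ℝ} (hL : 0 ≤ L)
    (hsmooth : ∀ x y, ‖gf x - gf y‖ ≤ L * ‖x - y‖) (hgS : Measurable (Function.uncurry gS))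
    (hunbiased : ∀ x, ∫ s, gS s x ∂D = gf x) (hvar : ∀ x, ∫ s, ‖gS s x - gf x‖ ^ 2 ∂D ≤ σ ^ 2)
    {x xtil g x₁ g₁ : Ω → E} {ξ : Ω → Ξ} (hx : Measurable x) (hxtil : Measurable xtil)
    (hg : Measurable g) (hξ : Measurable ξ) (hD : P.map ξ = D)
    (hind : IndepFun (fun ω => (x ω, xtil ω, g ω)) ξ P) {a ν : ℝ} (ha₀ : 0 < a) (ha₁ : a < 1)
    (hx₁ : ∀ ω, x₁ ω = x ω + ν • (xtil ω - x ω))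
    (hg₁ : ∀ ω, g₁ ω = (1 - a) • g ω + a • gS (ξ ω) (x₁ ω))
    (h₀ : Integrable (fun ω => ‖gf (x ω) - g ω‖ ^ 2) P)
    (h₁ : Integrable (fun ω => ‖gf (x₁ ω) - g₁ ω‖ ^ 2) P)
    (hΔ : Integrable (fun ω => ‖xtil ω - x ω‖ ^ 2) P) :
    ∫ ω, ‖gf (x₁ ω) - g₁ ω‖ ^ 2 ∂P ≤ (1 - a) * ∫ ω, ‖gf (x ω) - g ω‖ ^ 2 ∂P
      + a⁻¹ * (L * ν) ^ 2 * ∫ ω, ‖xtil ω - x ω‖ ^ 2 ∂P + a ^ 2 * σ ^ 2 := by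
  have hgf : Continuous gf := (LipschitzWith.of_dist_le_mul (K := L.toNNReal) fun x y => by
    simpa only [dist_eq_norm, Real.coe_toNNReal L hL] using hsmooth x y).continuous
  obtain rfl : x₁ = fun ω => x ω + ν • (xtil ω - x ω) := funext hx₁
  obtain rfl : g₁ = fun ω => (1 - a) • g ω + a • gS (ξ ω) (x ω + ν • (xtil ω - x ω)) :=
    funext hg₁
  have hx₁m : Measurable fun ω => x ω + ν • (xtil ω - x ω) := hx.add ((hxtil.sub hx).const_smul ν)
  have hind₁ : IndepFun (fun ω => (x ω + ν • (xtil ω - x ω), g ω)) ξ P :=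
    hind.comp (φ := fun p => (p.1 + ν • (p.2.1 - p.1), p.2.2)) (by fun_prop) measurable_id
  have hpt : ∀ ω, ‖gf (x ω + ν • (xtil ω - x ω)) - g ω‖ ^ 2
      ≤ (1 - a)⁻¹ * ‖gf (x ω) - g ω‖ ^ 2 + a⁻¹ * (L * ν) ^ 2 * ‖xtil ω - x ω‖ ^ 2 :=
    fun ω => norm_apply_add_smul_sub_sq_le hsmooth ha₀ ha₁ _ _ _
  have hbound : Integrable (fun ω => (1 - a)⁻¹ * ‖gf (x ω) - g ω‖ ^ 2
      + a⁻¹ * (L * ν) ^ 2 * ‖xtil ω - x ω‖ ^ 2) P := (h₀.const_mul _).add (hΔ.const_mul _)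
  have hA : Integrable (fun ω => ‖gf (x ω + ν • (xtil ω - x ω)) - g ω‖ ^ 2) P := by
    refine hbound.mono' ?_ (.of_forall fun ω => ?_)
    · exact (((hgf.measurable.comp hx₁m).sub hg).norm.pow_const 2).aestronglyMeasurable
    · rw [Real.norm_of_nonneg (by positivity)]
      exact hpt ω
  have hAle : ∫ ω, ‖gf (x ω + ν • (xtil ω - x ω)) - g ω‖ ^ 2 ∂P
      ≤ (1 - a)⁻¹ * ∫ ω, ‖gf (x ω) - g ω‖ ^ 2 ∂P
        + a⁻¹ * (L * ν) ^ 2 * ∫ ω, ‖xtil ω - x ω‖ ^ 2 ∂P := by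
    rw [← integral_const_mul, ← integral_const_mul,
      ← integral_add (h₀.const_mul _) (hΔ.const_mul _)]
    exact integral_mono hA hbound hpt
  have h1a : 0 < 1 - a := sub_pos.2 ha₁
  calc _ ≤ (1 - a) ^ 2 * ∫ ω, ‖gf (x ω + ν • (xtil ω - x ω)) - g ω‖ ^ 2 ∂P
        + a ^ 2 * σ ^ 2 :=
        integral_norm_sq_grad_sub_momentum_le hgf hgS hunbiased hvar
          hx₁m hg hξ hD hind₁ ha₀.ne' hA h₁
    _ ≤ (1 - a) ^ 2 * ((1 - a)⁻¹ * ∫ ω, ‖gf (x ω) - g ω‖ ^ 2 ∂P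
          + a⁻¹ * (L * ν) ^ 2 * ∫ ω, ‖xtil ω - x ω‖ ^ 2 ∂P) + a ^ 2 * σ ^ 2 := by gcongr
    _ ≤ _ := by
        have hT : 0 ≤ a⁻¹ * (L * ν) ^ 2 * ∫ ω, ‖xtil ω - x ω‖ ^ 2 ∂P := by positivity
        have hsq : (1 - a) ^ 2 ≤ 1 := by nlinarith
        have hcancel : (1 - a) ^ 2 * (1 - a)⁻¹ = 1 - a := by field_simp
        rw [mul_add, ← mul_assoc, hcancel]
        linarith [mul_le_of_le_one_left hT hsq]

end Momentum

theorem mul_div_rpow_half_lt_one {k m t c : ℝ} (hk : 0 < k) (hm : 0 ≤ m) (ht : 0 < t)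
    (hc : c ≤ m ^ (1 / 2 : ℝ) / k) : c * (k / (m + t) ^ (1 / 2 : ℝ)) < 1 := by
  have hmt : 0 < (m + t) ^ (1 / 2 : ℝ) := Real.rpow_pos_of_pos (by linarith) _
  calc c * (k / (m + t) ^ (1 / 2 : ℝ))
        ≤ m ^ (1 / 2 : ℝ) / k * (k / (m + t) ^ (1 / 2 : ℝ)) := by gcongr
    _ = m ^ (1 / 2 : ℝ) / (m + t) ^ (1 / 2 : ℝ) := by field_simp
    _ < 1 := (div_lt_one hmt).2 (Real.rpow_lt_rpow hm (by linarith) (by norm_num))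

theorem statement8_general {d : ℕ} {Ω : Type*} [MeasurableSpace Ω] (P : Measure Ω)
    [IsProbabilityMeasure P] {Ξ : Type*} [MeasurableSpace Ξ] (D : Measure Ξ)
    [IsProbabilityMeasure D]
    (gS : Ξ → EuclideanSpace ℝ (Fin d) → EuclideanSpace ℝ (Fin d))
    (gf : EuclideanSpace ℝ (Fin d) → EuclideanSpace ℝ (Fin d))
    (L σ k m ρ γ c : ℝ) (hL : 0 < L)
    (hsmooth : ∀ x y : EuclideanSpace ℝ (Fin d), ‖gf x - gf y‖ ≤ L * ‖x - y‖)
    (hunbiased : ∀ x, ∫ ξ, gS ξ x ∂D = gf x)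
    (hvar : ∀ x, ∫ ξ, ‖gS ξ x - gf x‖ ^ 2 ∂D ≤ σ ^ 2)
    (hgSmeas : Measurable (Function.uncurry gS))
    (hk : 0 < k) (hm : k ^ 2 ≤ m) (hρ : 0 < ρ) (hγ : 0 < γ)
    (hc1 : 8 * L * γ / ρ ≤ c) (hc2 : c ≤ m ^ ((1 : ℝ) / 2) / k)
    (μ : ℕ → ℝ) (hμ : ∀ t : ℕ, μ t = k / (m + t) ^ ((1 : ℝ) / 2))
    (α : ℕ → ℝ) (hα : ∀ t : ℕ, α (t + 1) = c * μ t) :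
    ∀ t : ℕ, 1 ≤ t →
    ∀ (xt xtil gt : Ω → EuclideanSpace ℝ (Fin d)) (ξ1 : Ω → Ξ)
      (xt1 gt1 : Ω → EuclideanSpace ℝ (Fin d)),
      Measurable xt → Measurable xtil → Measurable gt → Measurable ξ1 →
      (∀ ω, xt1 ω = xt ω + μ t • (xtil ω - xt ω)) →
      Measure.map ξ1 P = D →
      IndepFun (fun ω => (xt ω, xtil ω, gt ω)) ξ1 P →
      (∀ ω, gt1 ω = (1 - α (t + 1)) • gt ω + α (t + 1) • gS (ξ1 ω) (xt1 ω)) →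
      Integrable (fun ω => ‖gf (xt ω) - gt ω‖ ^ 2) P →
      Integrable (fun ω => ‖gf (xt1 ω) - gt1 ω‖ ^ 2) P →
      Integrable (fun ω => ‖xtil ω - xt ω‖ ^ 2) P →
      (∫ ω, ‖gf (xt1 ω) - gt1 ω‖ ^ 2 ∂P) - ∫ ω, ‖gf (xt ω) - gt ω‖ ^ 2 ∂P
        ≤ -(8 * L * γ * μ t / ρ) * ∫ ω, ‖gf (xt ω) - gt ω‖ ^ 2 ∂P
          + L * ρ * μ t / (8 * γ) * ∫ ω, ‖xtil ω - xt ω‖ ^ 2 ∂P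
          + m / k ^ 2 * μ t ^ 2 * σ ^ 2 := by
  intro t ht xt xtil gt ξ1 xt1 gt1 hxt hxtil hgt hξ hxt1 hD hind hgt1 h₀ h₁ hΔ
  have hm₀ : 0 ≤ m := (sq_nonneg k).trans hm
  have hμ₀ : 0 < μ t := hμ t ▸ div_pos hk (Real.rpow_pos_of_pos (by positivity) _)
  have hc₀ : 0 < c := (by positivity : 0 < 8 * L * γ / ρ).trans_le hc1
  have hstep : c * μ t < 1 := hμ t ▸ mul_div_rpow_half_lt_one hk hm₀ (by positivity) hc2
  have key := integral_norm_sq_momentum_error_step_le hL.le hsmooth hgSmeas hunbiased hvar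
    hxt hxtil hgt hξ hD hind (hα t ▸ mul_pos hc₀ hμ₀) (hα t ▸ hstep) hxt1 hgt1 h₀ h₁ hΔ
  rw [hα] at key
  have hI₀ : 0 ≤ ∫ ω, ‖gf (xt ω) - gt ω‖ ^ 2 ∂P := integral_nonneg fun ω => by positivity
  have hIΔ : 0 ≤ ∫ ω, ‖xtil ω - xt ω‖ ^ 2 ∂P := integral_nonneg fun ω => by positivity
  have hdescent : 8 * L * γ * μ t / ρ ≤ c * μ t := by rw [mul_div_right_comm]; gcongr
  have hdrift : (c * μ t)⁻¹ * (L * μ t) ^ 2 ≤ L * ρ * μ t / (8 * γ) := by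
    rw [div_le_iff₀ hρ] at hc1
    rw [show (c * μ t)⁻¹ * (L * μ t) ^ 2 = L * μ t * L / c by field_simp,
      div_le_div_iff₀ hc₀ (by positivity)]
    nlinarith [mul_le_mul_of_nonneg_left hc1 (mul_pos hL hμ₀).le]
  have hnoise : (c * μ t) ^ 2 * σ ^ 2 ≤ m / k ^ 2 * μ t ^ 2 * σ ^ 2 := by
    have hc_sq := pow_le_pow_left₀ hc₀.le hc2 2
    rw [div_pow, ← Real.sqrt_eq_rpow, Real.sq_sqrt hm₀] at hc_sq
    rw [mul_pow]
    gcongr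
  linarith [mul_le_mul_of_nonneg_right hdescent hI₀, mul_le_mul_of_nonneg_right hdrift hIΔ]

/-- one-step inequality for the momentum estimator in SUPER-ADAM,
`τ = 0`: with `f(x) = E_ξ[f(x;ξ)]` differentiable and `L`-smooth, unbiased stochastic
gradients with variance `≤ σ²`, `k > 0`, `m ≥ k²`, `ρ, γ > 0`, `8Lγ/ρ ≤ c ≤ m^{1/2}/k`,
`μ_t = k/(m+t)^{1/2}`, `α_{t+1} = c μ_t`, `x_{t+1} = x_t + μ_t(x̃_{t+1} − x_t)`,
`ξ_{t+1} ∼ D` independent of `(x_t, x̃_{t+1}, g_t)`, and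
`g_{t+1} = (1 − α_{t+1}) g_t + α_{t+1} ∇f(x_{t+1};ξ_{t+1})`: for every `t ≥ 1`,
`E‖∇f(x_{t+1}) − g_{t+1}‖² − E‖∇f(x_t) − g_t‖²
  ≤ −(8Lγμ_t/ρ) E‖∇f(x_t) − g_t‖² + (Lρμ_t/(8γ)) E‖x̃_{t+1} − x_t‖² + (m/k²) μ_t² σ²`. -/
theorem statement8 {d : ℕ} {Ω : Type*} [MeasurableSpace Ω] (P : Measure Ω)
    [IsProbabilityMeasure P] {Ξ : Type*} [MeasurableSpace Ξ] (D : Measure Ξ)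
    [IsProbabilityMeasure D]
    (fS : Ξ → EuclideanSpace ℝ (Fin d) → ℝ)
    (gS : Ξ → EuclideanSpace ℝ (Fin d) → EuclideanSpace ℝ (Fin d))
    (f : EuclideanSpace ℝ (Fin d) → ℝ)
    (gf : EuclideanSpace ℝ (Fin d) → EuclideanSpace ℝ (Fin d))
    (L σ k m ρ γ c : ℝ) (hL : 0 < L) (hσ : 0 ≤ σ)
    (hf : ∀ x, f x = ∫ ξ, fS ξ x ∂D)
    (hgS : ∀ ξ x, HasGradientAt (fS ξ) (gS ξ x) x)
    (hgf : ∀ x, HasGradientAt f (gf x) x)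
    (hsmooth : ∀ x y : EuclideanSpace ℝ (Fin d), ‖gf x - gf y‖ ≤ L * ‖x - y‖)
    (hunbiased : ∀ x, ∫ ξ, gS ξ x ∂D = gf x)
    (hvar : ∀ x, ∫ ξ, ‖gS ξ x - gf x‖ ^ 2 ∂D ≤ σ ^ 2)
    (hgSmeas : Measurable (Function.uncurry gS))
    (hk : 0 < k) (hm : k ^ 2 ≤ m) (hρ : 0 < ρ) (hγ : 0 < γ)
    (hc1 : 8 * L * γ / ρ ≤ c) (hc2 : c ≤ m ^ ((1 : ℝ) / 2) / k)
    (μ : ℕ → ℝ) (hμ : ∀ t : ℕ, μ t = k / (m + t) ^ ((1 : ℝ) / 2))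
    (α : ℕ → ℝ) (hα : ∀ t : ℕ, α (t + 1) = c * μ t) :
    ∀ t : ℕ, 1 ≤ t →
    ∀ (xt xtil gt : Ω → EuclideanSpace ℝ (Fin d)) (ξ1 : Ω → Ξ)
      (xt1 gt1 : Ω → EuclideanSpace ℝ (Fin d)),
      Measurable xt → Measurable xtil → Measurable gt → Measurable ξ1 →
      (∀ ω, xt1 ω = xt ω + μ t • (xtil ω - xt ω)) →
      Measure.map ξ1 P = D →
      IndepFun (fun ω => (xt ω, xtil ω, gt ω)) ξ1 P →
      (∀ ω, gt1 ω = (1 - α (t + 1)) • gt ω + α (t + 1) • gS (ξ1 ω) (xt1 ω)) →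
      Integrable (fun ω => ‖gf (xt ω) - gt ω‖ ^ 2) P →
      Integrable (fun ω => ‖gf (xt1 ω) - gt1 ω‖ ^ 2) P →
      Integrable (fun ω => ‖xtil ω - xt ω‖ ^ 2) P →
      (∫ ω, ‖gf (xt1 ω) - gt1 ω‖ ^ 2 ∂P) - ∫ ω, ‖gf (xt ω) - gt ω‖ ^ 2 ∂P
        ≤ -(8 * L * γ * μ t / ρ) * ∫ ω, ‖gf (xt ω) - gt ω‖ ^ 2 ∂P
          + L * ρ * μ t / (8 * γ) * ∫ ω, ‖xtil ω - xt ω‖ ^ 2 ∂P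
          + m / k ^ 2 * μ t ^ 2 * σ ^ 2 :=
  statement8_general P D gS gf L σ k m ρ γ c hL hsmooth hunbiased hvar hgSmeas hk hm hρ hγ hc1 hc2 μ
    hμ α hα
end

section
/- Let X ⊆ ℝ^d be a closed convex set, let f : ℝ^d → ℝ be differentiable, let H ∈ ℝ^{d×d} be a symmetric matrix with H ⪰ ρ I_d (ρ > 0), let x ∈ X, g ∈ ℝ^d and γ > 0. Let x̃ be the minimizer over y ∈ X of ⟨g, y⟩ + (1/(2γ)) (y − x)ᵀ H (y − x), let x⁺ be the minimizer over y ∈ X of ⟨∇f(x), y⟩ + (1/(2γ)) (y − x)ᵀ H (y − x), and define the gradient mapping G_X(x, ∇f(x), γ) = (x − x⁺)/γ. Then ‖G_X(x, ∇f(x), γ)‖ ≤ (1/γ) ‖x − x̃‖ + (1/ρ) ‖∇f(x) − g‖. -/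
open scoped RealInnerProductSpace
open Filter Topology

/-! Both points minimize a model `⟨v, y⟩ + c ⟨T (y - x), y - x⟩` over `X`, for `v = g` and
`v = ∇f(x)` respectively. The first-order conditions of the two problems, tested at each
other's minimizer and added, give `2c ⟨T w, w⟩ ≤ ⟨g - ∇f(x), w⟩` for `w = x⁺ - x̃`; coercivity
of `T` then yields `‖x⁺ - x̃‖ ≤ (γ / ρ) ‖∇f(x) - g‖`, and the triangle inequality through `x̃`
finishes the proof. -/

lemma nonneg_of_forall_add_mul_nonneg {a b : ℝ} (h : ∀ t ∈ Set.Ioc (0 : ℝ) 1, 0 ≤ a + t * b) :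
    0 ≤ a := by
  have hlim : Tendsto (fun t : ℝ => a + t * b) (𝓝[>] 0) (𝓝 a) := by
    have : Tendsto (fun t : ℝ => a + t * b) (𝓝 0) (𝓝 (a + 0 * b)) :=
      tendsto_const_nhds.add (tendsto_id.mul_const b)
    simpa using this.mono_left nhdsWithin_le_nhds
  exact ge_of_tendsto hlim (eventually_of_mem (Ioc_mem_nhdsGT zero_lt_one) h)

section QuadModel

variable {E : Type*} [NormedAddCommGroup E] [InnerProductSpace ℝ E]

def quadModel (T : E →L[ℝ] E) (c : ℝ) (x v y : E) : ℝ :=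
  ⟪v, y⟫ + c * ⟪T (y - x), y - x⟫

variable {X : Set E} {T : E →L[ℝ] E} {c : ℝ} {x : E}

lemma quadModel_add_smul (v z h : E) (t : ℝ) :
    quadModel T c x v (z + t • h) = quadModel T c x v z
      + t * ((⟪v, h⟫ + c * (⟪T (z - x), h⟫ + ⟪T h, z - x⟫)) + t * (c * ⟪T h, h⟫)) := by
  have hsub : z + t • h - x = (z - x) + t • h := by abel
  simp only [quadModel, hsub, map_add, map_smul, inner_add_left, inner_add_right,
    inner_smul_left, inner_smul_right, RCLike.conj_to_real]
  ring

theorem IsMinOn.quadModel_firstOrder_nonneg (hX : Convex ℝ X) {v z y : E} (hz : z ∈ X)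
    (hmin : IsMinOn (quadModel T c x v) X z) (hy : y ∈ X) :
    0 ≤ ⟪v, y - z⟫ + c * (⟪T (z - x), y - z⟫ + ⟪T (y - z), z - x⟫) := by
  refine nonneg_of_forall_add_mul_nonneg (b := c * ⟪T (y - z), y - z⟫) fun t ht => ?_
  have hmem : z + t • (y - z) ∈ X := hX.add_smul_sub_mem hz hy ⟨ht.1.le, ht.2⟩
  have hle := isMinOn_iff.1 hmin _ hmem
  rw [quadModel_add_smul] at hle
  exact nonneg_of_mul_nonneg_right (by linarith) ht.1

theorem inner_map_sub_le_of_isMinOn_quadModel (hX : Convex ℝ X) {v₁ v₂ z₁ z₂ : E}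
    (hz₁ : z₁ ∈ X) (hz₂ : z₂ ∈ X)
    (h₁ : IsMinOn (quadModel T c x v₁) X z₁) (h₂ : IsMinOn (quadModel T c x v₂) X z₂) :
    2 * c * ⟪T (z₁ - z₂), z₁ - z₂⟫ ≤ ⟪v₂ - v₁, z₁ - z₂⟫ := by
  have hfo₁ := h₁.quadModel_firstOrder_nonneg hX hz₁ hz₂
  have hfo₂ := h₂.quadModel_firstOrder_nonneg hX hz₂ hz₁
  have hx₁ : z₁ - x = (z₂ - x) + (z₁ - z₂) := by abel
  have hx₂ : z₂ - z₁ = -(z₁ - z₂) := (neg_sub z₁ z₂).symm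
  rw [hx₁, hx₂] at hfo₁
  simp only [map_add, map_neg, inner_add_left, inner_add_right, inner_neg_left,
    inner_neg_right] at hfo₁
  rw [inner_sub_left]
  linarith

theorem mul_norm_sub_le_of_isMinOn_quadModel (hX : Convex ℝ X) {ρ : ℝ}
    (hT : ∀ w, ρ * ‖w‖ ^ 2 ≤ ⟪T w, w⟫) (hc : 0 ≤ c) {v₁ v₂ z₁ z₂ : E}
    (hz₁ : z₁ ∈ X) (hz₂ : z₂ ∈ X)
    (h₁ : IsMinOn (quadModel T c x v₁) X z₁) (h₂ : IsMinOn (quadModel T c x v₂) X z₂) :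
    2 * c * ρ * ‖z₁ - z₂‖ ≤ ‖v₁ - v₂‖ := by
  set w := z₁ - z₂
  rcases (norm_nonneg w).eq_or_lt with hw | hw
  · rw [← hw, mul_zero]
    exact norm_nonneg _
  have hsq : 2 * c * ρ * ‖w‖ * ‖w‖ ≤ ‖v₁ - v₂‖ * ‖w‖ :=
    calc 2 * c * ρ * ‖w‖ * ‖w‖ = 2 * c * (ρ * ‖w‖ ^ 2) := by ring
      _ ≤ 2 * c * ⟪T w, w⟫ := by gcongr; exact hT w
      _ ≤ ⟪v₂ - v₁, w⟫ := inner_map_sub_le_of_isMinOn_quadModel hX hz₁ hz₂ h₁ h₂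
      _ ≤ ‖v₂ - v₁‖ * ‖w‖ := real_inner_le_norm _ _
      _ = ‖v₁ - v₂‖ * ‖w‖ := by rw [norm_sub_rev]
  exact le_of_mul_le_mul_right hsq hw

end QuadModel

theorem statement9_general {d : ℕ} (X : Set (EuclideanSpace ℝ (Fin d)))
    (hXconvex : Convex ℝ X)
    (gf : EuclideanSpace ℝ (Fin d) → EuclideanSpace ℝ (Fin d))
    (H : Matrix (Fin d) (Fin d) ℝ)
    (ρ : ℝ) (hρ : 0 < ρ)
    (hHpd : ∀ v : EuclideanSpace ℝ (Fin d),
      ρ * ‖v‖ ^ 2 ≤ ⟪(Matrix.toEuclideanCLM (𝕜 := ℝ) H) v, v⟫)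
    (x : EuclideanSpace ℝ (Fin d))
    (g : EuclideanSpace ℝ (Fin d)) (γ : ℝ) (hγ : 0 < γ)
    (xtil : EuclideanSpace ℝ (Fin d)) (hxtilX : xtil ∈ X)
    (hxtilmin : ∀ y ∈ X,
      ⟪g, xtil⟫ + (1 / (2 * γ)) * ⟪(Matrix.toEuclideanCLM (𝕜 := ℝ) H) (xtil - x), xtil - x⟫
        ≤ ⟪g, y⟫ + (1 / (2 * γ)) * ⟪(Matrix.toEuclideanCLM (𝕜 := ℝ) H) (y - x), y - x⟫)
    (xplus : EuclideanSpace ℝ (Fin d)) (hxplusX : xplus ∈ X)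
    (hxplusmin : ∀ y ∈ X,
      ⟪gf x, xplus⟫ + (1 / (2 * γ)) * ⟪(Matrix.toEuclideanCLM (𝕜 := ℝ) H) (xplus - x), xplus - x⟫
        ≤ ⟪gf x, y⟫ + (1 / (2 * γ)) * ⟪(Matrix.toEuclideanCLM (𝕜 := ℝ) H) (y - x), y - x⟫)
    (G : EuclideanSpace ℝ (Fin d)) (hG : G = (1 / γ) • (x - xplus)) :
    ‖G‖ ≤ (1 / γ) * ‖x - xtil‖ + (1 / ρ) * ‖gf x - g‖ := by
  have hdist : ‖xtil - xplus‖ ≤ γ / ρ * ‖gf x - g‖ := by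
    have h := mul_norm_sub_le_of_isMinOn_quadModel hXconvex hHpd (by positivity)
      hxtilX hxplusX (isMinOn_iff.2 hxtilmin) (isMinOn_iff.2 hxplusmin)
    rw [norm_sub_rev (gf x), div_mul_eq_mul_div, le_div_iff₀ hρ]
    field_simp at h
    linarith
  calc ‖G‖ = (1 / γ) * ‖x - xplus‖ := by
        rw [hG, norm_smul, Real.norm_of_nonneg (by positivity)]
    _ ≤ (1 / γ) * (‖x - xtil‖ + ‖xtil - xplus‖) := by
        gcongr
        exact norm_sub_le_norm_sub_add_norm_sub _ _ _
    _ ≤ (1 / γ) * (‖x - xtil‖ + γ / ρ * ‖gf x - g‖) := by gcongr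
    _ = (1 / γ) * ‖x - xtil‖ + (1 / ρ) * ‖gf x - g‖ := by field_simp

/-- bound of the gradient mapping by the measure `M_t` in SUPER-ADAM:
for `X ⊆ ℝ^d` closed convex, `f` differentiable, `H` a symmetric matrix with
`H ⪰ ρ I_d` (`ρ > 0`), `x ∈ X`, `g ∈ ℝ^d`, `γ > 0`, if `x̃` minimizes
`⟨g, y⟩ + (1/(2γ))(y − x)ᵀH(y − x)` over `X`, `x⁺` minimizes
`⟨∇f(x), y⟩ + (1/(2γ))(y − x)ᵀH(y − x)` over `X`, and
`G_X(x, ∇f(x), γ) = (x − x⁺)/γ`, then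
`‖G_X(x, ∇f(x), γ)‖ ≤ (1/γ)‖x − x̃‖ + (1/ρ)‖∇f(x) − g‖`. -/
theorem statement9 {d : ℕ} (X : Set (EuclideanSpace ℝ (Fin d)))
    (hXne : X.Nonempty) (hXclosed : IsClosed X) (hXconvex : Convex ℝ X)
    (f : EuclideanSpace ℝ (Fin d) → ℝ)
    (gf : EuclideanSpace ℝ (Fin d) → EuclideanSpace ℝ (Fin d))
    (hf : ∀ x, HasGradientAt f (gf x) x)
    (H : Matrix (Fin d) (Fin d) ℝ) (hHsymm : H.IsSymm)
    (ρ : ℝ) (hρ : 0 < ρ)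
    (hHpd : ∀ v : EuclideanSpace ℝ (Fin d),
      ρ * ‖v‖ ^ 2 ≤ ⟪(Matrix.toEuclideanCLM (𝕜 := ℝ) H) v, v⟫)
    (x : EuclideanSpace ℝ (Fin d)) (hx : x ∈ X)
    (g : EuclideanSpace ℝ (Fin d)) (γ : ℝ) (hγ : 0 < γ)
    (xtil : EuclideanSpace ℝ (Fin d)) (hxtilX : xtil ∈ X)
    (hxtilmin : ∀ y ∈ X,
      ⟪g, xtil⟫ + (1 / (2 * γ)) * ⟪(Matrix.toEuclideanCLM (𝕜 := ℝ) H) (xtil - x), xtil - x⟫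
        ≤ ⟪g, y⟫ + (1 / (2 * γ)) * ⟪(Matrix.toEuclideanCLM (𝕜 := ℝ) H) (y - x), y - x⟫)
    (xplus : EuclideanSpace ℝ (Fin d)) (hxplusX : xplus ∈ X)
    (hxplusmin : ∀ y ∈ X,
      ⟪gf x, xplus⟫ + (1 / (2 * γ)) * ⟪(Matrix.toEuclideanCLM (𝕜 := ℝ) H) (xplus - x), xplus - x⟫
        ≤ ⟪gf x, y⟫ + (1 / (2 * γ)) * ⟪(Matrix.toEuclideanCLM (𝕜 := ℝ) H) (y - x), y - x⟫)
    (G : EuclideanSpace ℝ (Fin d)) (hG : G = (1 / γ) • (x - xplus)) :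
    ‖G‖ ≤ (1 / γ) * ‖x - xtil‖ + (1 / ρ) * ‖gf x - g‖ :=
  statement9_general X hXconvex gf H ρ hρ hHpd x g γ hγ xtil hxtilX hxtilmin xplus hxplusX hxplusmin
    G hG
end
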